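/- arXiv:2105.11499 — 5 statements merged into one kernel-verified Lean document; each statement's English description precedes it below -/
import Mathlib

section
/- Let 0 ≤ k ≤ n, r ∈ {00,10,01,11}, σ ∈ S_n, a ∈ {1,…,n−1}, and I ∈ I_k. If exactly one of σ(a), σ(a+1) belongs to I (i.e. σ(a) ∈ I and σ(a+1) ∉ I, or σ(a) ∉ I and σ(a+1) ∈ I), then in the field F = ℂ(t_1,…,t_k,z_1,…,z_n,ℏ) one has the identity W^{(r)}_{σ s_{a,a+1}, I} = ((z_{σ(a)} − z_{σ(a+1)})/(z_{σ(a+1)} − z_{σ(a)} + ℏ)) · W^{(r)}_{σ, I} + (ℏ/(z_{σ(a+1)} − z_{σ(a)} + ℏ)) · W^{(r)}_{σ, s_{σ(a),σ(a+1)}(I)}. -/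
open Finset

noncomputable section

open scoped Classical

/-- Variables `t₁,…,t_k`, `z₁,…,z_n`, `ℏ`. -/
abbrev WVar (n k : ℕ) : Type := (Fin k ⊕ Fin n) ⊕ Unit

/-- The field `ℂ(t₁,…,t_k, z₁,…,z_n, ℏ)`. -/
abbrev WField (n k : ℕ) : Type := FractionRing (MvPolynomial (WVar n k) ℂ)

def tvar (n k : ℕ) (a : Fin k) : WField n k :=
  algebraMap (MvPolynomial (WVar n k) ℂ) (WField n k) (MvPolynomial.X (Sum.inl (Sum.inl a)))

def zvar (n k : ℕ) (b : Fin n) : WField n k :=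
  algebraMap (MvPolynomial (WVar n k) ℂ) (WField n k) (MvPolynomial.X (Sum.inl (Sum.inr b)))

def hvar (n k : ℕ) : WField n k :=
  algebraMap (MvPolynomial (WVar n k) ℂ) (WField n k) (MvPolynomial.X (Sum.inr ()))

/-- The factor attached to a pair `a < b` of `t`-indices, with `x = t_b - t_a`:
`1/((t_b-t_a+ℏ)(t_b-t_a))` for `r=00`, `1/(t_b-t_a)` for `r=10` and `r=01`,
`(t_b-t_a+ℏ)/(t_b-t_a)` for `r=11`.  Here `r = 00,10,01,11` is encoded as
`(false,false), (true,false), (false,true), (true,true)`. -/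
def tPairFactor (r : Bool × Bool) {F : Type*} [Field F] (x h : F) : F :=
  match r with
  | (false, false) => 1 / ((x + h) * x)
  | (true, false) => 1 / x
  | (false, true) => 1 / x
  | (true, true) => (x + h) / x

/-- `U^{(r)}_I`, as a function of the values `t_a`, `z_b`, `ℏ` in an arbitrary field,
where `idx : Fin k → Fin n` is the increasing enumeration `a ↦ i_a` of `I`. -/
def superU (r : Bool × Bool) {F : Type*} [Field F] {n k : ℕ} (idx : Fin k → Fin n)
    (t : Fin k → F) (z : Fin n → F) (h : F) : F :=
  (∏ a : Fin k,
    ((∏ b ∈ univ.filter (fun b : Fin n => b < idx a),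
        (if r.2 then z b - t a + h else t a - z b + h)) *
     (∏ b ∈ univ.filter (fun b : Fin n => idx a < b), (z b - t a)))) *
  (∏ a : Fin k, ∏ b ∈ univ.filter (fun b : Fin k => a < b), tPairFactor r (t b - t a) h) *
  (if r.2 then
     h ^ k * (∏ a : Fin n, ∏ b ∈ univ.filter (fun b : Fin n => a < b), (z b - z a + h)) *
       ∏ a : Fin k, ∏ b : Fin n, (z b - t a + h)⁻¹
   else 1)

/-- `W^{(r)}_I = Sym_k U^{(r)}_I`. -/
def superW (r : Bool × Bool) {F : Type*} [Field F] {n k : ℕ} (idx : Fin k → Fin n)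
    (t : Fin k → F) (z : Fin n → F) (h : F) : F :=
  ∑ τ : Equiv.Perm (Fin k), superU r idx (t ∘ τ) z h

/-- The increasing enumeration `i_1 < … < i_k` of a `k`-element subset of `{1,…,n}`. -/
def setIdx {n k : ℕ} (I : Finset (Fin n)) (hI : I.card = k) (a : Fin k) : Fin n :=
  (I.orderIsoOfFin hI a : Fin n)

/-- The super weight function `W^{(r)}_{σ,I} = W^{(r)}_{σ⁻¹(I)}(t₁,…,t_k,z_{σ(1)},…,z_{σ(n)},ℏ)`. -/
def weightW (r : Bool × Bool) {n k : ℕ} (σ : Equiv.Perm (Fin n))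
    (I : Finset (Fin n)) (hI : I.card = k) : WField n k :=
  superW r (setIdx (I.map σ.symm.toEmbedding) (by rw [Finset.card_map]; exact hI))
    (tvar n k) (fun b => zvar n k (σ b)) (hvar n k)


lemma swap_val {n : ℕ} (p q x : Fin n) :
    ((Equiv.swap p q x : Fin n) : ℕ) =
      if (x : ℕ) = (p : ℕ) then (q : ℕ) else if (x : ℕ) = (q : ℕ) then (p : ℕ) else (x : ℕ) := by
  rcases eq_or_ne x p with rfl | h1
  · simp [Equiv.swap_apply_left]
  · rcases eq_or_ne x q with rfl | h2
    · rw [Equiv.swap_apply_right, if_neg (fun e => h1 (Fin.ext e)), if_pos rfl]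
    · rw [Equiv.swap_apply_of_ne_of_ne h1 h2, if_neg (fun e => h1 (Fin.ext e)),
        if_neg (fun e => h2 (Fin.ext e))]

variable {n : ℕ} {p q : Fin n}

lemma swap_fix_of_lt_p (hpq : (q : ℕ) = (p : ℕ) + 1) {b : Fin n} (hb : b < p) :
    Equiv.swap p q b = b := by
  apply Equiv.swap_apply_of_ne_of_ne
  · rintro rfl; exact absurd hb (lt_irrefl _)
  · rintro rfl; rw [Fin.lt_def] at hb; omega

lemma swap_fix_of_q_lt (hpq : (q : ℕ) = (p : ℕ) + 1) {b : Fin n} (hb : q < b) :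
    Equiv.swap p q b = b := by
  apply Equiv.swap_apply_of_ne_of_ne
  · rintro rfl; rw [Fin.lt_def] at hb; omega
  · rintro rfl; exact absurd hb (lt_irrefl _)

lemma filter_lt_q (hpq : (q : ℕ) = (p : ℕ) + 1) :
    Finset.filter (fun b : Fin n => b < q) Finset.univ
      = insert p (Finset.filter (fun b : Fin n => b < p) Finset.univ) := by
  ext b
  simp only [Finset.mem_filter, Finset.mem_univ, true_and, Finset.mem_insert, Fin.lt_def,
    Fin.ext_iff]
  omega

lemma filter_p_lt (hpq : (q : ℕ) = (p : ℕ) + 1) :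
    Finset.filter (fun b : Fin n => p < b) Finset.univ
      = insert q (Finset.filter (fun b : Fin n => q < b) Finset.univ) := by
  ext b
  simp only [Finset.mem_filter, Finset.mem_univ, true_and, Finset.mem_insert, Fin.lt_def,
    Fin.ext_iff]
  omega

lemma p_not_mem_lt : p ∉ Finset.filter (fun b : Fin n => b < p) Finset.univ := by simp
lemma q_not_mem_gt : q ∉ Finset.filter (fun b : Fin n => q < b) Finset.univ := by simp

lemma prod_swap_invariant {M : Type*} [CommMonoid M] (e : Equiv.Perm (Fin n)) {S : Finset (Fin n)}
    (hS : ∀ b ∈ S, e b ∈ S) (f : Fin n → M) : ∏ b ∈ S, f (e b) = ∏ b ∈ S, f b := by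
  have himg : S.image e = S :=
    Finset.eq_of_subset_of_card_le
      (fun x hx => by obtain ⟨b, hb, rfl⟩ := Finset.mem_image.1 hx; exact hS b hb)
      (le_of_eq (Finset.card_image_of_injective S e.injective).symm)
  calc ∏ b ∈ S, f (e b) = ∏ b ∈ S.image e, f b :=
        (Finset.prod_image (fun x _ y _ hxy => e.injective hxy)).symm
    _ = ∏ b ∈ S, f b := by rw [himg]

lemma swap_mem_lt (hpq : (q : ℕ) = (p : ℕ) + 1) {c : Fin n} (hcp : c ≠ p) (hcq : c ≠ q) :
    ∀ b ∈ Finset.filter (fun b : Fin n => b < c) Finset.univ,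
      Equiv.swap p q b ∈ Finset.filter (fun b : Fin n => b < c) Finset.univ := by
  intro b hb
  simp only [Finset.mem_filter, Finset.mem_univ, true_and] at hb ⊢
  have h1 : (c : ℕ) ≠ (p : ℕ) := fun e => hcp (Fin.ext e)
  have h2 : (c : ℕ) ≠ (q : ℕ) := fun e => hcq (Fin.ext e)
  rw [Fin.lt_def] at hb ⊢
  rw [swap_val]
  split_ifs <;> omega

lemma swap_mem_gt (hpq : (q : ℕ) = (p : ℕ) + 1) {c : Fin n} (hcp : c ≠ p) (hcq : c ≠ q) :
    ∀ b ∈ Finset.filter (fun b : Fin n => c < b) Finset.univ,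
      Equiv.swap p q b ∈ Finset.filter (fun b : Fin n => c < b) Finset.univ := by
  intro b hb
  simp only [Finset.mem_filter, Finset.mem_univ, true_and] at hb ⊢
  have h1 : (c : ℕ) ≠ (p : ℕ) := fun e => hcp (Fin.ext e)
  have h2 : (c : ℕ) ≠ (q : ℕ) := fun e => hcq (Fin.ext e)
  rw [Fin.lt_def] at hb ⊢
  rw [swap_val]
  split_ifs <;> omega

lemma swap_lt_of_mem {J : Finset (Fin n)} (hpq : (q : ℕ) = (p : ℕ) + 1)
    (hone : (p ∈ J ∧ q ∉ J) ∨ (p ∉ J ∧ q ∈ J)) {x y : Fin n} (hx : x ∈ J) (hy : y ∈ J)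
    (hxy : x < y) : Equiv.swap p q x < Equiv.swap p q y := by
  rw [Fin.lt_def] at hxy ⊢
  rw [swap_val, swap_val]
  rcases hone with ⟨hp1, hq1⟩ | ⟨hp1, hq1⟩
  · have h1 : (x : ℕ) ≠ (q : ℕ) := fun e => hq1 ((Fin.ext e : x = q) ▸ hx)
    have h2 : (y : ℕ) ≠ (q : ℕ) := fun e => hq1 ((Fin.ext e : y = q) ▸ hy)
    split_ifs <;> omega
  · have h1 : (x : ℕ) ≠ (p : ℕ) := fun e => hp1 ((Fin.ext e : x = p) ▸ hx)
    have h2 : (y : ℕ) ≠ (p : ℕ) := fun e => hp1 ((Fin.ext e : y = p) ▸ hy)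
    split_ifs <;> omega
lemma ZZ_swap {F : Type*} [CommRing F] {n : ℕ} (z : Fin n → F) (h : F) (p q : Fin n)
    (hpq : (q : ℕ) = (p : ℕ) + 1) :
    (z q - z p + h) * ∏ a : Fin n, ∏ b ∈ Finset.filter (fun b : Fin n => a < b) Finset.univ,
        (z (Equiv.swap p q b) - z (Equiv.swap p q a) + h)
      = (z p - z q + h) * ∏ a : Fin n, ∏ b ∈ Finset.filter (fun b : Fin n => a < b) Finset.univ,
        (z b - z a + h) := by
  have hpn : p ≠ q := by intro e; rw [e] at hpq; omega
  have hplt : p < q := by rw [Fin.lt_def]; omega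
  have key : ∀ w : Fin n → F,
      (∏ a : Fin n, ∏ b ∈ Finset.filter (fun b : Fin n => a < b) Finset.univ, (w b - w a + h))
        = ∏ x : Fin n × Fin n, (if x.1 < x.2 then w x.2 - w x.1 + h else 1) := by
    intro w
    rw [Fintype.prod_prod_type]
    exact Finset.prod_congr rfl fun a _ => (Finset.prod_filter _ _)
  rw [key, key]
  have re : (∏ x : Fin n × Fin n,
        (if x.1 < x.2 then z (Equiv.swap p q x.2) - z (Equiv.swap p q x.1) + h else 1))
      = ∏ x : Fin n × Fin n,
        (if Equiv.swap p q x.1 < Equiv.swap p q x.2 then z x.2 - z x.1 + h else 1) := by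
    rw [← Equiv.prod_comp (Equiv.prodCongr (Equiv.swap p q) (Equiv.swap p q))
      (fun x : Fin n × Fin n =>
        if Equiv.swap p q x.1 < Equiv.swap p q x.2 then z x.2 - z x.1 + h else 1)]
    exact Finset.prod_congr rfl fun x _ => by
      simp [Equiv.prodCongr_apply, Equiv.swap_apply_self]
  rw [re]
  have m1 : ((q, p) : Fin n × Fin n) ∈ (Finset.univ : Finset (Fin n × Fin n)).erase (p, q) := by
    refine Finset.mem_erase.mpr ⟨?_, Finset.mem_univ _⟩
    rintro e
    exact hpn (congrArg Prod.snd e)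
  have ext2 : ∀ f : Fin n × Fin n → F,
      (∏ x : Fin n × Fin n, f x)
        = f (p, q) * (f (q, p) * ∏ x ∈ ((Finset.univ : Finset (Fin n × Fin n)).erase (p, q)).erase (q, p), f x) := by
    intro f
    rw [← Finset.mul_prod_erase Finset.univ f (Finset.mem_univ ((p, q) : Fin n × Fin n)),
      ← Finset.mul_prod_erase _ f m1]
  rw [ext2, ext2]
  have c1 : (if Equiv.swap p q p < Equiv.swap p q q then z q - z p + h else 1) = 1 := by
    rw [Equiv.swap_apply_left, Equiv.swap_apply_right, if_neg (not_lt.mpr hplt.le)]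
  have c2 : (if Equiv.swap p q q < Equiv.swap p q p then z p - z q + h else 1) = z p - z q + h := by
    rw [Equiv.swap_apply_right, Equiv.swap_apply_left, if_pos hplt]
  have c3 : (if p < q then z q - z p + h else 1) = z q - z p + h := if_pos hplt
  have c4 : (if q < p then z p - z q + h else 1) = 1 := if_neg (not_lt.mpr hplt.le)
  have mid : ∏ x ∈ ((Finset.univ : Finset (Fin n × Fin n)).erase (p, q)).erase (q, p),
        (if Equiv.swap p q x.1 < Equiv.swap p q x.2 then z x.2 - z x.1 + h else 1)
      = ∏ x ∈ ((Finset.univ : Finset (Fin n × Fin n)).erase (p, q)).erase (q, p),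
        (if x.1 < x.2 then z x.2 - z x.1 + h else 1) := by
    refine Finset.prod_congr rfl fun x hx => ?_
    have hx2 := Finset.mem_erase.mp hx
    have hx1 := Finset.mem_erase.mp hx2.2
    have e1 : ¬((x.1 : ℕ) = (p : ℕ) ∧ (x.2 : ℕ) = (q : ℕ)) := by
      rintro ⟨u, v⟩
      exact hx1.1 (Prod.ext_iff.mpr ⟨Fin.ext u, Fin.ext v⟩)
    have e2 : ¬((x.1 : ℕ) = (q : ℕ) ∧ (x.2 : ℕ) = (p : ℕ)) := by
      rintro ⟨u, v⟩
      exact hx2.1 (Prod.ext_iff.mpr ⟨Fin.ext u, Fin.ext v⟩)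
    have hiff : (Equiv.swap p q x.1 < Equiv.swap p q x.2) ↔ (x.1 < x.2) := by
      rw [Fin.lt_def, Fin.lt_def, swap_val, swap_val]
      split_ifs <;> omega
    simp only [hiff]
  rw [mid, c1, c2, c3, c4]
  ring

lemma setIdx_mem {n k : ℕ} (J : Finset (Fin n)) (hJ : J.card = k) (a : Fin k) :
    setIdx J hJ a ∈ J := (J.orderIsoOfFin hJ a).2

lemma setIdx_strictMono {n k : ℕ} (J : Finset (Fin n)) (hJ : J.card = k) :
    StrictMono (setIdx J hJ) := fun a b hab =>
  Subtype.coe_lt_coe.mpr ((J.orderIsoOfFin hJ).strictMono hab)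

lemma setIdx_congr {n k : ℕ} {J₁ J₂ : Finset (Fin n)} (h : J₁ = J₂) (h₁ : J₁.card = k)
    (h₂ : J₂.card = k) : setIdx J₁ h₁ = setIdx J₂ h₂ := by subst h; rfl

lemma setIdx_map_swap {n k : ℕ} {p q : Fin n} (hpq : (q : ℕ) = (p : ℕ) + 1)
    (J : Finset (Fin n)) (hJ : J.card = k)
    (hone : (p ∈ J ∧ q ∉ J) ∨ (p ∉ J ∧ q ∈ J))
    (hJ' : (J.map (Equiv.swap p q).toEmbedding).card = k) :
    setIdx (J.map (Equiv.swap p q).toEmbedding) hJ' = fun a => Equiv.swap p q (setIdx J hJ a) := by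
  have hmem : ∀ x : Fin k, Equiv.swap p q (setIdx J hJ x) ∈ J.map (Equiv.swap p q).toEmbedding := by
    intro x
    rw [Finset.mem_map_equiv, Equiv.symm_swap, Equiv.swap_apply_self]
    exact setIdx_mem J hJ x
  have hmono : StrictMono (fun a => Equiv.swap p q (setIdx J hJ a)) :=
    fun a b hab => swap_lt_of_mem hpq hone (setIdx_mem J hJ a) (setIdx_mem J hJ b)
      (setIdx_strictMono J hJ hab)
  funext a
  rw [setIdx, Finset.coe_orderIsoOfFin_apply, ← Finset.orderEmbOfFin_unique hJ' hmem hmono]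

lemma zvar_sub_ne (n k : ℕ) (u v : Fin n) : zvar n k v - zvar n k u + hvar n k ≠ 0 := by
  intro h0
  set φ := algebraMap (MvPolynomial (WVar n k) ℂ) (WField n k) with hφ
  have hpoly : (MvPolynomial.X (Sum.inl (Sum.inr v)) - MvPolynomial.X (Sum.inl (Sum.inr u))
      + MvPolynomial.X (Sum.inr ()) : MvPolynomial (WVar n k) ℂ) = 0 := by
    apply IsFractionRing.injective (MvPolynomial (WVar n k) ℂ) (WField n k)
    rw [φ.map_zero, φ.map_add, φ.map_sub]
    exact h0
  have h1 := congrArg (MvPolynomial.eval (fun w : WVar n k => if w = Sum.inr () then (1 : ℂ) else 0)) hpoly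
  simp [MvPolynomial.eval_X] at h1

lemma prod_split_p {M : Type*} [CommMonoid M] {n k : ℕ} {p q : Fin n}
    (hpq : (q : ℕ) = (p : ℕ) + 1) {w : Fin k → Fin n} {a₀ : Fin k} (hp : w a₀ = p)
    (f1 f2 : Fin k → Fin n → M) :
    (∏ a : Fin k, ((∏ b ∈ Finset.filter (fun b : Fin n => b < w a) Finset.univ, f1 a b)
        * ∏ b ∈ Finset.filter (fun b : Fin n => w a < b) Finset.univ, f2 a b))
      = ((∏ b ∈ Finset.filter (fun b : Fin n => b < p) Finset.univ, f1 a₀ b)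
          * (f2 a₀ q * ∏ b ∈ Finset.filter (fun b : Fin n => q < b) Finset.univ, f2 a₀ b))
        * ∏ a ∈ Finset.univ.erase a₀,
            ((∏ b ∈ Finset.filter (fun b : Fin n => b < w a) Finset.univ, f1 a b)
              * ∏ b ∈ Finset.filter (fun b : Fin n => w a < b) Finset.univ, f2 a b) := by
  rw [← Finset.mul_prod_erase Finset.univ _ (Finset.mem_univ a₀), hp, filter_p_lt hpq,
    Finset.prod_insert q_not_mem_gt]

lemma prod_split_q {M : Type*} [CommMonoid M] {n k : ℕ} {p q : Fin n}
    (hpq : (q : ℕ) = (p : ℕ) + 1) {w : Fin k → Fin n} {a₀ : Fin k} (hq : w a₀ = q)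
    (f1 f2 : Fin k → Fin n → M) :
    (∏ a : Fin k, ((∏ b ∈ Finset.filter (fun b : Fin n => b < w a) Finset.univ, f1 a b)
        * ∏ b ∈ Finset.filter (fun b : Fin n => w a < b) Finset.univ, f2 a b))
      = ((f1 a₀ p * ∏ b ∈ Finset.filter (fun b : Fin n => b < p) Finset.univ, f1 a₀ b)
          * ∏ b ∈ Finset.filter (fun b : Fin n => q < b) Finset.univ, f2 a₀ b)
        * ∏ a ∈ Finset.univ.erase a₀,
            ((∏ b ∈ Finset.filter (fun b : Fin n => b < w a) Finset.univ, f1 a b)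
              * ∏ b ∈ Finset.filter (fun b : Fin n => w a < b) Finset.univ, f2 a b) := by
  rw [← Finset.mul_prod_erase Finset.univ _ (Finset.mem_univ a₀), hq, filter_lt_q hpq,
    Finset.prod_insert p_not_mem_lt]

lemma superU_exchange {F : Type*} [Field F] {n k : ℕ} (r : Bool × Bool) (t : Fin k → F)
    (z : Fin n → F) (h : F) (p q : Fin n) (hpq : (q : ℕ) = (p : ℕ) + 1)
    (idx : Fin k → Fin n) (a₀ : Fin k)
    (hcase : idx a₀ = p ∨ idx a₀ = q)
    (hother : ∀ a, a ≠ a₀ → idx a ≠ p ∧ idx a ≠ q)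
    (hD : z q - z p + h ≠ 0) :
    superU r (fun a => Equiv.swap p q (idx a)) t (fun b => z (Equiv.swap p q b)) h =
      ((z p - z q) / (z q - z p + h)) * superU r idx t z h +
        (h / (z q - z p + h)) * superU r (fun a => Equiv.swap p q (idx a)) t z h := by
  rw [div_mul_eq_mul_div, div_mul_eq_mul_div, ← add_div, eq_div_iff hD]
  simp only [superU]
  have hf1 : ∀ x : Fin n, (if r.2 = true then z x - t a₀ + h else t a₀ - z x + h)
      = (if r.2 = true then (1 : F) else -1) * (z x - t a₀) + h := by
    intro x; cases hr : r.2 <;> simp only [hr, Bool.false_eq_true, if_false, if_true] <;> ring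
  have hε2 : (if r.2 = true then (1 : F) else -1) * (if r.2 = true then (1 : F) else -1) = 1 := by
    cases hr : r.2 <;> simp [hr]
  have hb1 : (∏ b ∈ Finset.filter (fun b : Fin n => b < p) Finset.univ,
        (if r.2 = true then z (Equiv.swap p q b) - t a₀ + h else t a₀ - z (Equiv.swap p q b) + h))
      = ∏ b ∈ Finset.filter (fun b : Fin n => b < p) Finset.univ,
        (if r.2 = true then z b - t a₀ + h else t a₀ - z b + h) :=
    Finset.prod_congr rfl fun b hb => by
      rw [swap_fix_of_lt_p hpq (Finset.mem_filter.mp hb).2]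
  have hb2 : (∏ b ∈ Finset.filter (fun b : Fin n => q < b) Finset.univ,
        (z (Equiv.swap p q b) - t a₀))
      = ∏ b ∈ Finset.filter (fun b : Fin n => q < b) Finset.univ, (z b - t a₀) :=
    Finset.prod_congr rfl fun b hb => by
      rw [swap_fix_of_q_lt hpq (Finset.mem_filter.mp hb).2]
  have htailsw : (∏ a ∈ Finset.univ.erase a₀,
        ((∏ b ∈ Finset.filter (fun b : Fin n => b < Equiv.swap p q (idx a)) Finset.univ,
            (if r.2 = true then z (Equiv.swap p q b) - t a + h else t a - z (Equiv.swap p q b) + h))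
          * ∏ b ∈ Finset.filter (fun b : Fin n => Equiv.swap p q (idx a) < b) Finset.univ,
            (z (Equiv.swap p q b) - t a)))
      = ∏ a ∈ Finset.univ.erase a₀,
        ((∏ b ∈ Finset.filter (fun b : Fin n => b < idx a) Finset.univ,
            (if r.2 = true then z b - t a + h else t a - z b + h))
          * ∏ b ∈ Finset.filter (fun b : Fin n => idx a < b) Finset.univ, (z b - t a)) := by
    refine Finset.prod_congr rfl fun a ha => ?_
    obtain ⟨h1, h2⟩ := hother a (Finset.ne_of_mem_erase ha)
    rw [Equiv.swap_apply_of_ne_of_ne h1 h2]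
    exact congrArg₂ (· * ·)
      (prod_swap_invariant (Equiv.swap p q) (swap_mem_lt hpq h1 h2)
        (fun b => if r.2 = true then z b - t a + h else t a - z b + h))
      (prod_swap_invariant (Equiv.swap p q) (swap_mem_gt hpq h1 h2) (fun b => z b - t a))
  have htail2 : (∏ a ∈ Finset.univ.erase a₀,
        ((∏ b ∈ Finset.filter (fun b : Fin n => b < Equiv.swap p q (idx a)) Finset.univ,
            (if r.2 = true then z b - t a + h else t a - z b + h))
          * ∏ b ∈ Finset.filter (fun b : Fin n => Equiv.swap p q (idx a) < b) Finset.univ,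
            (z b - t a)))
      = ∏ a ∈ Finset.univ.erase a₀,
        ((∏ b ∈ Finset.filter (fun b : Fin n => b < idx a) Finset.univ,
            (if r.2 = true then z b - t a + h else t a - z b + h))
          * ∏ b ∈ Finset.filter (fun b : Fin n => idx a < b) Finset.univ, (z b - t a)) := by
    refine Finset.prod_congr rfl fun a ha => ?_
    obtain ⟨h1, h2⟩ := hother a (Finset.ne_of_mem_erase ha)
    rw [Equiv.swap_apply_of_ne_of_ne h1 h2]
  have hTT : (∏ a : Fin k, ∏ b : Fin n, (z (Equiv.swap p q b) - t a + h)⁻¹)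
      = ∏ a : Fin k, ∏ b : Fin n, (z b - t a + h)⁻¹ :=
    Finset.prod_congr rfl fun a _ =>
      Equiv.prod_comp (Equiv.swap p q) (fun b => (z b - t a + h)⁻¹)
  have hBC : (z q - z p + h) *
        (if r.2 = true then
          (h ^ k * ∏ a : Fin n, ∏ b ∈ Finset.filter (fun b : Fin n => a < b) Finset.univ,
              (z (Equiv.swap p q b) - z (Equiv.swap p q a) + h))
            * ∏ a : Fin k, ∏ b : Fin n, (z (Equiv.swap p q b) - t a + h)⁻¹
        else 1)
      = ((if r.2 = true then (1 : F) else -1) * (z p - z q) + h) *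
        (if r.2 = true then
          (h ^ k * ∏ a : Fin n, ∏ b ∈ Finset.filter (fun b : Fin n => a < b) Finset.univ,
              (z b - z a + h))
            * ∏ a : Fin k, ∏ b : Fin n, (z b - t a + h)⁻¹
        else 1) := by
    cases hr : r.2
    · simp only [hr, Bool.false_eq_true, if_false]; ring
    · simp only [hr, if_true]
      rw [hTT]
      linear_combination (h ^ k * ∏ a : Fin k, ∏ b : Fin n, (z b - t a + h)⁻¹)
        * ZZ_swap z h p q hpq
  rcases hcase with hp | hq
  · have hswa₀ : Equiv.swap p q (idx a₀) = q := by rw [hp]; exact Equiv.swap_apply_left p q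
    rw [prod_split_p hpq hp]
    rw [prod_split_q hpq (w := fun a => Equiv.swap p q (idx a)) hswa₀]
    rw [prod_split_q hpq (w := fun a => Equiv.swap p q (idx a)) hswa₀]
    rw [Equiv.swap_apply_left p q, hb1, hb2, htailsw, htail2, hf1 q, hf1 p]
    set ε := (if r.2 = true then (1 : F) else -1) with hεd
    set K1 := ∏ b ∈ Finset.filter (fun b : Fin n => b < p) Finset.univ,
      (if r.2 = true then z b - t a₀ + h else t a₀ - z b + h) with hK1d
    set K2 := ∏ b ∈ Finset.filter (fun b : Fin n => q < b) Finset.univ, (z b - t a₀) with hK2d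
    set G := ∏ a ∈ Finset.univ.erase a₀,
      ((∏ b ∈ Finset.filter (fun b : Fin n => b < idx a) Finset.univ,
          (if r.2 = true then z b - t a + h else t a - z b + h))
        * ∏ b ∈ Finset.filter (fun b : Fin n => idx a < b) Finset.univ, (z b - t a)) with hGd
    set TP := ∏ a : Fin k, ∏ b ∈ Finset.filter (fun b : Fin k => a < b) Finset.univ,
      tPairFactor r (t b - t a) h with hTPd
    set B := (if r.2 = true then
        (h ^ k * ∏ a : Fin n, ∏ b ∈ Finset.filter (fun b : Fin n => a < b) Finset.univ,
            (z b - z a + h))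
          * ∏ a : Fin k, ∏ b : Fin n, (z b - t a + h)⁻¹
      else 1) with hBd
    set Bsw := (if r.2 = true then
        (h ^ k * ∏ a : Fin n, ∏ b ∈ Finset.filter (fun b : Fin n => a < b) Finset.univ,
            (z (Equiv.swap p q b) - z (Equiv.swap p q a) + h))
          * ∏ a : Fin k, ∏ b : Fin n, (z (Equiv.swap p q b) - t a + h)⁻¹
      else 1) with hBswd
    linear_combination ((ε * (z q - t a₀) + h) * K1 * K2 * G * TP) * hBC
      + (K1 * K2 * G * TP * B * (z p - z q) * (z q - t a₀)) * hε2
  · have hswa₀ : Equiv.swap p q (idx a₀) = p := by rw [hq]; exact Equiv.swap_apply_right p q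
    rw [prod_split_q hpq hq]
    rw [prod_split_p hpq (w := fun a => Equiv.swap p q (idx a)) hswa₀]
    rw [prod_split_p hpq (w := fun a => Equiv.swap p q (idx a)) hswa₀]
    rw [Equiv.swap_apply_right p q, hb1, hb2, htailsw, htail2, hf1 p]
    set ε := (if r.2 = true then (1 : F) else -1) with hεd
    set K1 := ∏ b ∈ Finset.filter (fun b : Fin n => b < p) Finset.univ,
      (if r.2 = true then z b - t a₀ + h else t a₀ - z b + h) with hK1d
    set K2 := ∏ b ∈ Finset.filter (fun b : Fin n => q < b) Finset.univ, (z b - t a₀) with hK2d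
    set G := ∏ a ∈ Finset.univ.erase a₀,
      ((∏ b ∈ Finset.filter (fun b : Fin n => b < idx a) Finset.univ,
          (if r.2 = true then z b - t a + h else t a - z b + h))
        * ∏ b ∈ Finset.filter (fun b : Fin n => idx a < b) Finset.univ, (z b - t a)) with hGd
    set TP := ∏ a : Fin k, ∏ b ∈ Finset.filter (fun b : Fin k => a < b) Finset.univ,
      tPairFactor r (t b - t a) h with hTPd
    set B := (if r.2 = true then
        (h ^ k * ∏ a : Fin n, ∏ b ∈ Finset.filter (fun b : Fin n => a < b) Finset.univ,
            (z b - z a + h))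
          * ∏ a : Fin k, ∏ b : Fin n, (z b - t a + h)⁻¹
      else 1) with hBd
    set Bsw := (if r.2 = true then
        (h ^ k * ∏ a : Fin n, ∏ b ∈ Finset.filter (fun b : Fin n => a < b) Finset.univ,
            (z (Equiv.swap p q b) - z (Equiv.swap p q a) + h))
          * ∏ a : Fin k, ∏ b : Fin n, (z (Equiv.swap p q b) - t a + h)⁻¹
      else 1) with hBswd
    linear_combination ((z p - t a₀) * K1 * K2 * G * TP) * hBC

lemma superW_exchange {F : Type*} [Field F] {n k : ℕ} (r : Bool × Bool) (t : Fin k → F)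
    (z : Fin n → F) (h : F) (p q : Fin n) (hpq : (q : ℕ) = (p : ℕ) + 1)
    (J : Finset (Fin n)) (hJ : J.card = k)
    (hJ' : (J.map (Equiv.swap p q).toEmbedding).card = k)
    (hone : (p ∈ J ∧ q ∉ J) ∨ (p ∉ J ∧ q ∈ J))
    (hD : z q - z p + h ≠ 0) :
    superW r (setIdx (J.map (Equiv.swap p q).toEmbedding) hJ') t
        (fun b => z (Equiv.swap p q b)) h =
      ((z p - z q) / (z q - z p + h)) * superW r (setIdx J hJ) t z h +
        (h / (z q - z p + h)) *
          superW r (setIdx (J.map (Equiv.swap p q).toEmbedding) hJ') t z h := by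
  obtain ⟨a₀, hcase, hother⟩ : ∃ a₀ : Fin k, (setIdx J hJ a₀ = p ∨ setIdx J hJ a₀ = q) ∧
      ∀ a, a ≠ a₀ → setIdx J hJ a ≠ p ∧ setIdx J hJ a ≠ q := by
    rcases hone with ⟨hp1, hq1⟩ | ⟨hp1, hq1⟩
    · refine ⟨(J.orderIsoOfFin hJ).symm ⟨p, hp1⟩, Or.inl (by simp [setIdx]),
        fun a ha => ⟨fun e => ?_, fun e => hq1 (e ▸ setIdx_mem J hJ a)⟩⟩
      have he : (J.orderIsoOfFin hJ) a = ⟨p, hp1⟩ := Subtype.ext e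
      exact ha (by rw [← (J.orderIsoOfFin hJ).symm_apply_apply a, he])
    · refine ⟨(J.orderIsoOfFin hJ).symm ⟨q, hq1⟩, Or.inr (by simp [setIdx]),
        fun a ha => ⟨fun e => hp1 (e ▸ setIdx_mem J hJ a), fun e => ?_⟩⟩
      have he : (J.orderIsoOfFin hJ) a = ⟨q, hq1⟩ := Subtype.ext e
      exact ha (by rw [← (J.orderIsoOfFin hJ).symm_apply_apply a, he])
  rw [setIdx_map_swap hpq J hJ hone hJ']
  rw [superW, superW, superW, Finset.mul_sum, Finset.mul_sum, ← Finset.sum_add_distrib]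
  exact Finset.sum_congr rfl fun τ _ =>
    superU_exchange r (t ∘ τ) z h p q hpq (setIdx J hJ) a₀ hcase hother hD


/-- Theorem `thm:generalR`, first case: if exactly one of `σ(a), σ(a+1)`
belongs to `I`, then
`W^{(r)}_{σ s_{a,a+1},I} = ((z_{σ(a)}-z_{σ(a+1)})/(z_{σ(a+1)}-z_{σ(a)}+ℏ)) W^{(r)}_{σ,I}
 + (ℏ/(z_{σ(a+1)}-z_{σ(a)}+ℏ)) W^{(r)}_{σ,s_{σ(a),σ(a+1)}(I)}`
for all `r ∈ {00,10,01,11}`.  Here `p, q` are the positions `a, a+1`. -/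
theorem superWeight_R_matrix_mixed_case {n k : ℕ} (hkn : k ≤ n) (r : Bool × Bool)
    (σ : Equiv.Perm (Fin n)) (I : Finset (Fin n)) (hI : I.card = k)
    (p q : Fin n) (hpq : (q : ℕ) = (p : ℕ) + 1)
    (hmix : (σ p ∈ I ∧ σ q ∉ I) ∨ (σ p ∉ I ∧ σ q ∈ I)) :
    weightW r (σ * Equiv.swap p q) I hI =
      ((zvar n k (σ p) - zvar n k (σ q)) / (zvar n k (σ q) - zvar n k (σ p) + hvar n k))
          * weightW r σ I hI
      + (hvar n k / (zvar n k (σ q) - zvar n k (σ p) + hvar n k))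
          * weightW r σ (I.map (Equiv.swap (σ p) (σ q)).toEmbedding)
              (by rw [Finset.card_map]; exact hI) := by
  have hJ : (I.map σ.symm.toEmbedding).card = k := by rw [Finset.card_map]; exact hI
  have hJ' : ((I.map σ.symm.toEmbedding).map (Equiv.swap p q).toEmbedding).card = k := by
    rw [Finset.card_map]; exact hJ
  have hmem : ∀ x : Fin n, x ∈ I.map σ.symm.toEmbedding ↔ σ x ∈ I := by
    intro x; rw [Finset.mem_map_equiv, Equiv.symm_symm]
  have hone : (p ∈ I.map σ.symm.toEmbedding ∧ q ∉ I.map σ.symm.toEmbedding) ∨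
      (p ∉ I.map σ.symm.toEmbedding ∧ q ∈ I.map σ.symm.toEmbedding) := by
    rcases hmix with ⟨h1, h2⟩ | ⟨h1, h2⟩
    · exact Or.inl ⟨(hmem p).mpr h1, fun c => h2 ((hmem q).mp c)⟩
    · exact Or.inr ⟨fun c => h1 ((hmem p).mp c), (hmem q).mpr h2⟩
  have hm1 : I.map (σ * Equiv.swap p q).symm.toEmbedding
      = (I.map σ.symm.toEmbedding).map (Equiv.swap p q).toEmbedding := by
    ext x
    simp only [Finset.mem_map_equiv, Equiv.symm_symm, Equiv.symm_swap, Equiv.Perm.mul_apply]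
  have hm2 : (I.map (Equiv.swap (σ p) (σ q)).toEmbedding).map σ.symm.toEmbedding
      = (I.map σ.symm.toEmbedding).map (Equiv.swap p q).toEmbedding := by
    ext x
    simp only [Finset.mem_map_equiv, Equiv.symm_symm, Equiv.symm_swap]
    rw [Equiv.swap_apply_apply]
    simp [Equiv.Perm.mul_apply]
  have e1 : weightW r (σ * Equiv.swap p q) I hI
      = superW r (setIdx ((I.map σ.symm.toEmbedding).map (Equiv.swap p q).toEmbedding) hJ')
          (tvar n k) (fun b => zvar n k (σ (Equiv.swap p q b))) (hvar n k) := by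
    rw [weightW, setIdx_congr hm1 _ hJ']
    rfl
  have e2 : weightW r σ I hI
      = superW r (setIdx (I.map σ.symm.toEmbedding) hJ) (tvar n k)
          (fun b => zvar n k (σ b)) (hvar n k) := rfl
  have e3 : weightW r σ (I.map (Equiv.swap (σ p) (σ q)).toEmbedding)
        (by rw [Finset.card_map]; exact hI)
      = superW r (setIdx ((I.map σ.symm.toEmbedding).map (Equiv.swap p q).toEmbedding) hJ')
          (tvar n k) (fun b => zvar n k (σ b)) (hvar n k) := by
    rw [weightW, setIdx_congr hm2 _ hJ']
  rw [e1, e2, e3]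
  exact superW_exchange r (tvar n k) (fun b => zvar n k (σ b)) (hvar n k) p q hpq
    (I.map σ.symm.toEmbedding) hJ hJ' hone (zvar_sub_ne n k (σ p) (σ q))
end
end

section
/- Let 0 ≤ k ≤ n, σ ∈ S_n, a ∈ {1,…,n−1}, and I ∈ I_k. If both σ(a) ∈ I and σ(a+1) ∈ I, then in the field F = ℂ(t_1,…,t_k,z_1,…,z_n,ℏ): W^{(r)}_{σ s_{a,a+1}, I} = W^{(r)}_{σ, I} for r ∈ {00, 01}, and W^{(r)}_{σ s_{a,a+1}, I} = ((z_{σ(a)} − z_{σ(a+1)} + ℏ)/(z_{σ(a+1)} − z_{σ(a)} + ℏ)) · W^{(r)}_{σ, I} for r ∈ {10, 11}. -/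
open Finset

noncomputable section

open scoped Classical

variable {F : Type*} [CommMonoid F]

/-- Product over an invariant set composed with a swap. -/
lemma prod_swap_invariant_s1 {m : ℕ} (u v : Fin m) (T : Finset (Fin m)) (hT : u ∈ T ↔ v ∈ T)
    (G : Fin m → F) : ∏ b ∈ T, G (Equiv.swap u v b) = ∏ b ∈ T, G b := by
  by_cases huv : u = v
  · subst huv; simp
  by_cases hu : u ∈ T
  · exact Equiv.Perm.prod_comp _ _ _ (by
      intro x hx
      rcases Equiv.swap_apply_ne_self_iff.mp hx with ⟨-, hx | hx⟩ <;> subst hx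
      · exact hu
      · exact hT.mp hu)
  · refine Finset.prod_congr rfl fun b hb => ?_
    rw [Equiv.swap_apply_of_ne_of_ne]
    · rintro rfl; exact hu hb
    · rintro rfl; exact hu (hT.mpr hb)

/-- Double product over `a < b` as a product over the set of ordered pairs. -/
lemma prod_pairs {m : ℕ} (G : Fin m → Fin m → F) :
    (∏ a : Fin m, ∏ b ∈ univ.filter (fun b => a < b), G a b)
      = ∏ ab ∈ univ.filter (fun ab : Fin m × Fin m => ab.1 < ab.2), G ab.1 ab.2 := by
  rw [Finset.prod_filter, ← Finset.univ_product_univ, Finset.prod_product]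
  refine Finset.prod_congr rfl fun a _ => ?_
  rw [Finset.prod_filter]

lemma swap_lt_of_adj {m : ℕ} {u v a b : Fin m} (huv : (v : ℕ) = u + 1) (hab : a < b)
    (hne : (a, b) ≠ (u, v)) : Equiv.swap u v a < Equiv.swap u v b := by
  have h1 : a ≠ u ∨ b ≠ v := by
    by_contra hc; push_neg at hc; exact hne (by rw [hc.1, hc.2])
  rw [Equiv.swap_apply_def, Equiv.swap_apply_def]
  have hab' := (Fin.lt_def).mp hab
  clear hne
  split_ifs with h2 h3 h4 h5 h6 h7 h8 <;>
    · simp only [Fin.lt_def, Fin.ext_iff] at *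
      omega

/-- Adjacent-transposition relation for products over ordered pairs. -/
lemma pair_swap_prod {m : ℕ} (u v : Fin m) (huv : (v : ℕ) = u + 1) (G : Fin m → Fin m → F) :
    (∏ ab ∈ univ.filter (fun ab : Fin m × Fin m => ab.1 < ab.2),
        G (Equiv.swap u v ab.1) (Equiv.swap u v ab.2)) * G u v
      = (∏ ab ∈ univ.filter (fun ab : Fin m × Fin m => ab.1 < ab.2), G ab.1 ab.2) * G v u := by
  have huvlt : u < v := by rw [Fin.lt_def]; omega
  have hmem : (u, v) ∈ univ.filter (fun ab : Fin m × Fin m => ab.1 < ab.2) := by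
    simp [huvlt]
  rw [← Finset.mul_prod_erase _ _ hmem, ← Finset.mul_prod_erase _ (fun ab => G ab.1 ab.2) hmem]
  have hG : ∀ ab ∈ (univ.filter (fun ab : Fin m × Fin m => ab.1 < ab.2)).erase (u, v),
      (Equiv.swap u v ab.1, Equiv.swap u v ab.2)
        ∈ (univ.filter (fun ab : Fin m × Fin m => ab.1 < ab.2)).erase (u, v) := by
    intro ab hab
    rw [Finset.mem_erase, Finset.mem_filter] at hab ⊢
    obtain ⟨hne, -, hlt⟩ := hab
    refine ⟨?_, Finset.mem_univ _, swap_lt_of_adj huv hlt hne⟩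
    intro hcon
    have h1 : ab.1 = v := by
      have := congrArg (Equiv.swap u v) (congrArg Prod.fst hcon)
      simpa using this
    have h2 : ab.2 = u := by
      have := congrArg (Equiv.swap u v) (congrArg Prod.snd hcon)
      simpa using this
    rw [h1, h2] at hlt
    exact absurd hlt (not_lt.mpr huvlt.le)
  have key : (∏ ab ∈ (univ.filter (fun ab : Fin m × Fin m => ab.1 < ab.2)).erase (u, v),
      G (Equiv.swap u v ab.1) (Equiv.swap u v ab.2))
      = ∏ ab ∈ (univ.filter (fun ab : Fin m × Fin m => ab.1 < ab.2)).erase (u, v),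
        G ab.1 ab.2 := by
    refine Finset.prod_nbij' (fun ab => (Equiv.swap u v ab.1, Equiv.swap u v ab.2))
      (fun ab => (Equiv.swap u v ab.1, Equiv.swap u v ab.2)) hG hG ?_ ?_ ?_
    · intro a _; simp
    · intro a _; simp
    · intro a _; rfl
  rw [key]
  simp only [Equiv.swap_apply_left, Equiv.swap_apply_right]
  rw [mul_comm (G v u), mul_assoc, mul_assoc, mul_comm (G u v)]
  rw [mul_assoc]

section
variable {F : Type*} [Field F]

def blkF (r2 : Bool) {n : ℕ} (z : Fin n → F) (h : F) (i : Fin n) (u : F) : F :=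
  (∏ b ∈ univ.filter (fun b : Fin n => b < i), (if r2 then z b - u + h else u - z b + h)) *
  (∏ b ∈ univ.filter (fun b : Fin n => i < b), (z b - u))

lemma superU_eq (r : Bool × Bool) {n k : ℕ} (idx : Fin k → Fin n)
    (t : Fin k → F) (z : Fin n → F) (h : F) :
    superU r idx t z h = (∏ a : Fin k, blkF r.2 z h (idx a) (t a)) *
      (∏ a : Fin k, ∏ b ∈ univ.filter (fun b : Fin k => a < b), tPairFactor r (t b - t a) h) *
      (if r.2 then
        h ^ k * (∏ a : Fin n, ∏ b ∈ univ.filter (fun b : Fin n => a < b), (z b - z a + h)) *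
          ∏ a : Fin k, ∏ b : Fin n, (z b - t a + h)⁻¹
      else 1) := rfl

end

section Crux
variable {F : Type*} [Field F]

set_option maxHeartbeats 1000000 in
lemma crux (r : Bool × Bool) {n k : ℕ} (idx : Fin k → Fin n)
    (p q : Fin n) (c c' : Fin k) (hpq : (q : ℕ) = p + 1) (hcc : (c' : ℕ) = c + 1)
    (hcp : idx c = p) (hcq : idx c' = q)
    (hother : ∀ a : Fin k, a ≠ c → a ≠ c' → idx a ≠ p ∧ idx a ≠ q)
    (t : Fin k → F) (z : Fin n → F) (h : F)
    (hx : t c' - t c ≠ 0) (hxh : t c' - t c + h ≠ 0) (hxh' : t c - t c' + h ≠ 0)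
    (hQP : z q - z p + h ≠ 0) :
    superU r idx (t ∘ Equiv.swap c c') (z ∘ Equiv.swap p q) h
      + superU r idx t (z ∘ Equiv.swap p q) h
    = (if r.1 then (z p - z q + h) / (z q - z p + h) else 1) *
      (superU r idx (t ∘ Equiv.swap c c') z h + superU r idx t z h) := by
  have hpne : p ≠ q := by intro hc; rw [hc] at hpq; omega
  have hcne : c ≠ c' := by intro hc; rw [hc] at hcc; omega
  -- basic swap facts
  have hzp : (z ∘ Equiv.swap p q) p = z q := by simp [Equiv.swap_apply_left]
  have hzq : (z ∘ Equiv.swap p q) q = z p := by simp [Equiv.swap_apply_right]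
  have htc : (t ∘ Equiv.swap c c') c = t c' := by simp [Equiv.swap_apply_left]
  have htc' : (t ∘ Equiv.swap c c') c' = t c := by simp [Equiv.swap_apply_right]
  -- the two stable index sets
  set Tlt : Finset (Fin n) := univ.filter (fun b : Fin n => b < p) with hTlt
  set Tgt : Finset (Fin n) := univ.filter (fun b : Fin n => q < b) with hTgt
  have hset1 : univ.filter (fun b : Fin n => b < q) = insert p Tlt := by
    ext b; simp only [hTlt, mem_filter, mem_univ, true_and, mem_insert, Fin.lt_def, Fin.ext_iff]
    omega
  have hset2 : univ.filter (fun b : Fin n => p < b) = insert q Tgt := by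
    ext b; simp only [hTgt, mem_filter, mem_univ, true_and, mem_insert, Fin.lt_def, Fin.ext_iff]
    omega
  have hpTlt : p ∉ Tlt := by simp [hTlt]
  have hqTgt : q ∉ Tgt := by simp [hTgt]
  have hbTlt : ∀ b ∈ Tlt, b ≠ p ∧ b ≠ q := by
    intro b hb; rw [hTlt, mem_filter] at hb
    constructor <;> intro hc <;> rw [hc] at hb <;>
      simp only [Fin.lt_def] at hb <;> omega
  have hbTgt : ∀ b ∈ Tgt, b ≠ p ∧ b ≠ q := by
    intro b hb; rw [hTgt, mem_filter] at hb
    constructor <;> intro hc <;> rw [hc] at hb <;>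
      simp only [Fin.lt_def] at hb <;> omega
  -- z ∘ swap agrees with z on Tlt and Tgt
  have hzTlt : ∀ b ∈ Tlt, (z ∘ Equiv.swap p q) b = z b := by
    intro b hb
    simp only [Function.comp_apply]
    rw [Equiv.swap_apply_of_ne_of_ne (hbTlt b hb).1 (hbTlt b hb).2]
  have hzTgt : ∀ b ∈ Tgt, (z ∘ Equiv.swap p q) b = z b := by
    intro b hb
    simp only [Function.comp_apply]
    rw [Equiv.swap_apply_of_ne_of_ne (hbTgt b hb).1 (hbTgt b hb).2]
  -- blkF at p and q
  have blkq : ∀ (zz : Fin n → F) (u : F), blkF r.2 zz h q u =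
      ((if r.2 then zz p - u + h else u - zz p + h) *
        ∏ b ∈ Tlt, (if r.2 then zz b - u + h else u - zz b + h)) *
      ∏ b ∈ Tgt, (zz b - u) := by
    intro zz u
    unfold blkF
    rw [hset1, Finset.prod_insert hpTlt]
  have blkp : ∀ (zz : Fin n → F) (u : F), blkF r.2 zz h p u =
      (∏ b ∈ Tlt, (if r.2 then zz b - u + h else u - zz b + h)) *
      ((zz q - u) * ∏ b ∈ Tgt, (zz b - u)) := by
    intro zz u
    unfold blkF
    rw [hset2, Finset.prod_insert hqTgt]
  -- blkF invariance for indices away from p, q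
  have hblkinv : ∀ (i : Fin n), i ≠ p → i ≠ q → ∀ u : F,
      blkF r.2 (z ∘ Equiv.swap p q) h i u = blkF r.2 z h i u := by
    intro i hip hiq u
    have hip' : (i : ℕ) ≠ (p : ℕ) := fun hc => hip (Fin.ext hc)
    have hiq' : (i : ℕ) ≠ (q : ℕ) := fun hc => hiq (Fin.ext hc)
    unfold blkF
    congr 1
    · exact prod_swap_invariant_s1 p q _
        (by simp only [mem_filter, mem_univ, true_and, Fin.lt_def]; omega)
        (fun b => if r.2 then z b - u + h else u - z b + h)
    · exact prod_swap_invariant_s1 p q _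
        (by simp only [mem_filter, mem_univ, true_and, Fin.lt_def]; omega)
        (fun b => z b - u)
  -- the A-part decompositions
  set R : Finset (Fin k) := (univ.erase c).erase c' with hR
  have hmemc' : c' ∈ univ.erase c := by
    rw [Finset.mem_erase]; exact ⟨fun hc => hcne hc.symm, mem_univ _⟩
  have hRmem : ∀ a ∈ R, a ≠ c ∧ a ≠ c' := by
    intro a ha
    rw [hR, Finset.mem_erase, Finset.mem_erase] at ha
    exact ⟨ha.2.1, ha.1⟩
  have hAsplit : ∀ (zz : Fin n → F) (u : Fin k → F),
      (∏ a : Fin k, blkF r.2 zz h (idx a) (u a)) =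
      blkF r.2 zz h p (u c) * (blkF r.2 zz h q (u c') *
        ∏ a ∈ R, blkF r.2 zz h (idx a) (u a)) := by
    intro zz u
    rw [← Finset.mul_prod_erase univ _ (mem_univ c), ← Finset.mul_prod_erase _ _ hmemc', hcp, hcq,
      hR]
  -- R-part invariances
  have hRz : ∀ (u : Fin k → F),
      (∏ a ∈ R, blkF r.2 (z ∘ Equiv.swap p q) h (idx a) (u a)) =
      ∏ a ∈ R, blkF r.2 z h (idx a) (u a) := by
    intro u
    refine Finset.prod_congr rfl fun a ha => ?_
    obtain ⟨h1, h2⟩ := hRmem a ha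
    exact hblkinv _ (hother a h1 h2).1 (hother a h1 h2).2 _
  have hRt : ∀ (zz : Fin n → F),
      (∏ a ∈ R, blkF r.2 zz h (idx a) ((t ∘ Equiv.swap c c') a)) =
      ∏ a ∈ R, blkF r.2 zz h (idx a) (t a) := by
    intro zz
    refine Finset.prod_congr rfl fun a ha => ?_
    obtain ⟨h1, h2⟩ := hRmem a ha
    simp only [Function.comp_apply]
    rw [Equiv.swap_apply_of_ne_of_ne h1 h2]
  -- B-part relation
  have hB : (∏ a : Fin k, ∏ b ∈ univ.filter (fun b : Fin k => a < b),
        tPairFactor r ((t ∘ Equiv.swap c c') b - (t ∘ Equiv.swap c c') a) h)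
        * tPairFactor r (t c' - t c) h
      = (∏ a : Fin k, ∏ b ∈ univ.filter (fun b : Fin k => a < b),
        tPairFactor r (t b - t a) h) * tPairFactor r (t c - t c') h := by
    rw [prod_pairs (fun a b => tPairFactor r ((t ∘ Equiv.swap c c') b - (t ∘ Equiv.swap c c') a) h),
      prod_pairs (fun a b => tPairFactor r (t b - t a) h)]
    exact pair_swap_prod c c' hcc (fun a b => tPairFactor r (t b - t a) h)
  -- Z-part relation
  have hZ : (∏ a : Fin n, ∏ b ∈ univ.filter (fun b : Fin n => a < b),
        ((z ∘ Equiv.swap p q) b - (z ∘ Equiv.swap p q) a + h)) * (z q - z p + h)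
      = (∏ a : Fin n, ∏ b ∈ univ.filter (fun b : Fin n => a < b), (z b - z a + h))
        * (z p - z q + h) := by
    rw [prod_pairs (fun a b => (z ∘ Equiv.swap p q) b - (z ∘ Equiv.swap p q) a + h),
      prod_pairs (fun a b => z b - z a + h)]
    exact pair_swap_prod p q hpq (fun a b => z b - z a + h)
  -- D-part invariances
  have hD : ∀ (u : Fin k → F), (∏ a : Fin k, ∏ b : Fin n, ((z ∘ Equiv.swap p q) b - u a + h)⁻¹)
      = ∏ a : Fin k, ∏ b : Fin n, (z b - u a + h)⁻¹ := by
    intro u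
    refine Finset.prod_congr rfl fun a _ => ?_
    exact Equiv.prod_comp (Equiv.swap p q) (fun b => (z b - u a + h)⁻¹)
  have hDt : ∀ (zz : Fin n → F),
      (∏ a : Fin k, ∏ b : Fin n, (zz b - (t ∘ Equiv.swap c c') a + h)⁻¹)
      = ∏ a : Fin k, ∏ b : Fin n, (zz b - t a + h)⁻¹ :=
    fun zz => Equiv.prod_comp (Equiv.swap c c') (fun a => ∏ b : Fin n, (zz b - t a + h)⁻¹)
  -- pointwise rewrites on the stable sets
  have hprodTlt : ∀ u : F,
      (∏ b ∈ Tlt, (if r.2 then (z ∘ Equiv.swap p q) b - u + h else u - (z ∘ Equiv.swap p q) b + h))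
      = ∏ b ∈ Tlt, (if r.2 then z b - u + h else u - z b + h) :=
    fun u => Finset.prod_congr rfl fun b hb => by rw [hzTlt b hb]
  have hprodTgt : ∀ u : F, (∏ b ∈ Tgt, ((z ∘ Equiv.swap p q) b - u)) = ∏ b ∈ Tgt, (z b - u) :=
    fun u => Finset.prod_congr rfl fun b hb => by rw [hzTgt b hb]
  -- nonvanishing of the pair factor
  have hx2 : t c - t c' ≠ 0 := sub_ne_zero.mpr (Ne.symm (sub_ne_zero.mp hx))
  have hT0 : tPairFactor r (t c' - t c) h ≠ 0 := by
    rcases r with ⟨_|_, _|_⟩ <;> simp only [tPairFactor]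
    · exact one_div_ne_zero (mul_ne_zero hxh hx)
    · exact one_div_ne_zero hx
    · exact one_div_ne_zero hx
    · exact div_ne_zero hxh hx
  have hBs : (∏ a : Fin k, ∏ b ∈ univ.filter (fun b : Fin k => a < b),
        tPairFactor r ((t ∘ Equiv.swap c c') b - (t ∘ Equiv.swap c c') a) h)
      = (∏ a : Fin k, ∏ b ∈ univ.filter (fun b : Fin k => a < b), tPairFactor r (t b - t a) h)
        * tPairFactor r (t c - t c') h * (tPairFactor r (t c' - t c) h)⁻¹ := by
    rw [eq_mul_inv_iff_mul_eq₀ hT0]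
    exact hB
  have hZs : (∏ a : Fin n, ∏ b ∈ univ.filter (fun b : Fin n => a < b),
        ((z ∘ Equiv.swap p q) b - (z ∘ Equiv.swap p q) a + h))
      = (∏ a : Fin n, ∏ b ∈ univ.filter (fun b : Fin n => a < b), (z b - z a + h))
        * (z p - z q + h) * (z q - z p + h)⁻¹ := by
    rw [eq_mul_inv_iff_mul_eq₀ hQP]
    exact hZ
  simp only [superU_eq, hDt, hD, hZs, hBs, hAsplit, hRz, hRt, blkp, blkq, hprodTlt, hprodTgt,
    hzp, hzq, htc, htc']
  set K1 := ∏ b ∈ Tlt, (if r.2 then z b - t c + h else t c - z b + h) with hK1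
  set K2 := ∏ b ∈ Tlt, (if r.2 then z b - t c' + h else t c' - z b + h) with hK2
  set K3 := ∏ b ∈ Tgt, (z b - t c) with hK3
  set K4 := ∏ b ∈ Tgt, (z b - t c') with hK4
  set K5 := ∏ a ∈ R, blkF r.2 z h (idx a) (t a) with hK5
  set K6 := ∏ a : Fin k, ∏ b ∈ univ.filter (fun b : Fin k => a < b), tPairFactor r (t b - t a) h
    with hK6
  set K7 := ∏ a : Fin n, ∏ b ∈ univ.filter (fun b : Fin n => a < b), (z b - z a + h) with hK7
  set K8 := ∏ a : Fin k, ∏ b : Fin n, (z b - t a + h)⁻¹ with hK8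
  set A := t c with hA
  set B := t c' with hBB
  set P := z p with hP
  set Q := z q with hQQ
  clear_value K1 K2 K3 K4 K5 K6 K7 K8 A B P Q
  clear hB hZ hzp hzq htc htc' hset1 hset2 hpTlt hqTgt hbTlt hbTgt hzTlt hzTgt blkq blkp
    hblkinv hmemc' hRmem hAsplit hRz hRt hD hDt hprodTlt hprodTgt hBs hZs hcp hcq hother
  rcases r with ⟨r1, r2⟩
  cases r1 <;> cases r2 <;>
    simp only [tPairFactor, Bool.false_eq_true, Bool.true_eq_false, if_true, if_false,
      ite_true, ite_false] <;>
    field_simp <;>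
    ring

end Crux

section CruxW
variable {F : Type*} [Field F]

lemma cruxW (r : Bool × Bool) {n k : ℕ} (idx : Fin k → Fin n)
    (p q : Fin n) (c c' : Fin k) (hpq : (q : ℕ) = p + 1) (hcc : (c' : ℕ) = c + 1)
    (hcp : idx c = p) (hcq : idx c' = q)
    (hother : ∀ a : Fin k, a ≠ c → a ≠ c' → idx a ≠ p ∧ idx a ≠ q)
    (t : Fin k → F) (z : Fin n → F) (h : F)
    (ht : ∀ i j : Fin k, i ≠ j → t i - t j ≠ 0 ∧ t i - t j + h ≠ 0)
    (hQP : z q - z p + h ≠ 0) (h2 : (2 : F) ≠ 0) :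
    superW r idx t (z ∘ Equiv.swap p q) h
    = (if r.1 then (z p - z q + h) / (z q - z p + h) else 1) * superW r idx t z h := by
  have hcne : c' ≠ c := by intro hc; rw [hc] at hcc; omega
  have key : ∀ τ : Equiv.Perm (Fin k),
      superU r idx ((t ∘ τ) ∘ Equiv.swap c c') (z ∘ Equiv.swap p q) h
        + superU r idx (t ∘ τ) (z ∘ Equiv.swap p q) h
      = (if r.1 then (z p - z q + h) / (z q - z p + h) else 1) *
        (superU r idx ((t ∘ τ) ∘ Equiv.swap c c') z h + superU r idx (t ∘ τ) z h) := by
    intro τ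
    have hτne : τ c' ≠ τ c := fun hc => hcne (τ.injective hc)
    exact crux r idx p q c c' hpq hcc hcp hcq hother (t ∘ τ) z h
      (ht (τ c') (τ c) hτne).1 (ht (τ c') (τ c) hτne).2
      (by
        have := (ht (τ c) (τ c') (fun hc => hcne (τ.injective hc).symm)).2
        exact this) hQP
  have expand : ∀ zz : Fin n → F, (2 : F) * superW r idx t zz h
      = ∑ τ : Equiv.Perm (Fin k),
          (superU r idx ((t ∘ τ) ∘ Equiv.swap c c') zz h + superU r idx (t ∘ τ) zz h) := by
    intro zz
    rw [Finset.sum_add_distrib]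
    unfold superW
    rw [two_mul]
    congr 1
    exact (Fintype.sum_equiv (Equiv.mulRight (Equiv.swap c c'))
      (fun τ => superU r idx ((t ∘ τ) ∘ Equiv.swap c c') zz h)
      (fun τ => superU r idx (t ∘ τ) zz h) (fun τ => rfl)).symm
  have final : (2 : F) * superW r idx t (z ∘ Equiv.swap p q) h
      = (2 : F) * ((if r.1 then (z p - z q + h) / (z q - z p + h) else 1)
          * superW r idx t z h) := by
    rw [expand (z ∘ Equiv.swap p q), Finset.sum_congr rfl (fun τ _ => key τ),
      ← Finset.mul_sum, ← expand z]
    ring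
  exact mul_left_cancel₀ h2 final

end CruxW

lemma setIdx_congr_s1 {n k : ℕ} {S T : Finset (Fin n)} (hST : S = T) (hS : S.card = k)
    (hT : T.card = k) : setIdx S hS = setIdx T hT := by subst hST; rfl

lemma poly_ne_of_eval {n k : ℕ} (P : MvPolynomial (WVar n k) ℂ) (pt : WVar n k → ℂ)
    (hev : MvPolynomial.eval pt P ≠ 0) :
    algebraMap (MvPolynomial (WVar n k) ℂ) (WField n k) P ≠ 0 := by
  intro hc
  apply hev
  have hP : P = 0 := IsFractionRing.injective (MvPolynomial (WVar n k) ℂ) (WField n k)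
    (by rw [hc, map_zero])
  rw [hP, map_zero]

set_option synthInstance.maxHeartbeats 1000000 in
lemma tvar_sub_ne {n k : ℕ} (i j : Fin k) (hij : i ≠ j) : tvar n k i - tvar n k j ≠ 0 := by
  rw [tvar, tvar, ← map_sub]
  apply poly_ne_of_eval _ (fun w => if w = Sum.inl (Sum.inl i) then 1 else 0)
  simp [MvPolynomial.eval_X, hij.symm]

set_option synthInstance.maxHeartbeats 1000000 in
lemma tvar_sub_add_ne {n k : ℕ} (i j : Fin k) (hij : i ≠ j) :
    tvar n k i - tvar n k j + hvar n k ≠ 0 := by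
  rw [tvar, tvar, hvar, ← map_sub, ← map_add]
  apply poly_ne_of_eval _ (fun w => if w = Sum.inl (Sum.inl i) then 1 else 0)
  simp [MvPolynomial.eval_X, hij.symm]

set_option synthInstance.maxHeartbeats 1000000 in
lemma zvar_sub_add_ne {n k : ℕ} (i j : Fin n) (hij : i ≠ j) :
    zvar n k i - zvar n k j + hvar n k ≠ 0 := by
  rw [zvar, zvar, hvar, ← map_sub, ← map_add]
  apply poly_ne_of_eval _ (fun w => if w = Sum.inl (Sum.inr i) then 1 else 0)
  simp [MvPolynomial.eval_X, hij.symm]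

/-- Theorem `thm:generalR`, second case: if both `σ(a) ∈ I` and
`σ(a+1) ∈ I`, then `W^{(r)}_{σ s_{a,a+1},I} = W^{(r)}_{σ,I}` for `r ∈ {00,01}`
(first digit `0`), and
`W^{(r)}_{σ s_{a,a+1},I} = ((z_{σ(a)}-z_{σ(a+1)}+ℏ)/(z_{σ(a+1)}-z_{σ(a)}+ℏ)) W^{(r)}_{σ,I}`
for `r ∈ {10,11}` (first digit `1`). -/
theorem superWeight_R_matrix_both_in_case {n k : ℕ} (hkn : k ≤ n) (r : Bool × Bool)
    (σ : Equiv.Perm (Fin n)) (I : Finset (Fin n)) (hI : I.card = k)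
    (p q : Fin n) (hpq : (q : ℕ) = (p : ℕ) + 1)
    (hin : σ p ∈ I ∧ σ q ∈ I) :
    (r.1 = false → weightW r (σ * Equiv.swap p q) I hI = weightW r σ I hI) ∧
    (r.1 = true → weightW r (σ * Equiv.swap p q) I hI =
      ((zvar n k (σ p) - zvar n k (σ q) + hvar n k) /
        (zvar n k (σ q) - zvar n k (σ p) + hvar n k)) * weightW r σ I hI) := by
  
  obtain ⟨hp, hq⟩ := hin
  have hpqne : p ≠ q := by intro hc; rw [hc] at hpq; omega
  set J : Finset (Fin n) := I.map σ.symm.toEmbedding with hJdef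
  have hJcard : J.card = k := by rw [hJdef, Finset.card_map]; exact hI
  have hmem' : ∀ (τ : Equiv.Perm (Fin n)) (b : Fin n),
      b ∈ I.map τ.symm.toEmbedding ↔ τ b ∈ I := by
    intro τ b
    simp only [Finset.mem_map, Equiv.coe_toEmbedding]
    constructor
    · rintro ⟨a, ha, rfl⟩; simpa using ha
    · intro hb; exact ⟨τ b, hb, by simp⟩
  have hpJ : p ∈ J := by rw [hJdef, hmem' σ p]; exact hp
  have hqJ : q ∈ J := by rw [hJdef, hmem' σ q]; exact hq
  have hJ2 : I.map (σ * Equiv.swap p q).symm.toEmbedding = J := by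
    ext b
    rw [hmem' (σ * Equiv.swap p q) b, hJdef, hmem' σ b, Equiv.Perm.mul_apply]
    by_cases hbp : b = p
    · subst hbp; rw [Equiv.swap_apply_left]; exact ⟨fun _ => hp, fun _ => hq⟩
    by_cases hbq : b = q
    · subst hbq; rw [Equiv.swap_apply_right]; exact ⟨fun _ => hq, fun _ => hp⟩
    rw [Equiv.swap_apply_of_ne_of_ne hbp hbq]
  -- the increasing enumeration of J
  have hsm : StrictMono (setIdx J hJcard) := by
    intro a b hab
    exact Subtype.coe_lt_coe.mpr ((J.orderIsoOfFin hJcard).lt_iff_lt.mpr hab)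
  set c : Fin k := (J.orderIsoOfFin hJcard).symm ⟨p, hpJ⟩ with hcdef
  set c' : Fin k := (J.orderIsoOfFin hJcard).symm ⟨q, hqJ⟩ with hcdef'
  have hcp : setIdx J hJcard c = p := by
    rw [setIdx, hcdef, OrderIso.apply_symm_apply]
  have hcq : setIdx J hJcard c' = q := by
    rw [setIdx, hcdef', OrderIso.apply_symm_apply]
  have hplt : p < q := by rw [Fin.lt_def]; omega
  have hclt : c < c' := by
    rw [← hsm.lt_iff_lt, hcp, hcq]; exact hplt
  have hcc : (c' : ℕ) = (c : ℕ) + 1 := by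
    by_contra hcon
    have h1 : (c : ℕ) + 1 < (c' : ℕ) := by
      have := (Fin.lt_def).mp hclt; omega
    set a : Fin k := ⟨(c : ℕ) + 1, lt_trans h1 c'.isLt⟩ with hadef
    have hca : c < a := by rw [Fin.lt_def, hadef]; simp
    have hac : a < c' := by rw [Fin.lt_def, hadef]; simpa using h1
    have h2 : p < setIdx J hJcard a := by rw [← hcp]; exact hsm hca
    have h3 : setIdx J hJcard a < q := by rw [← hcq]; exact hsm hac
    rw [Fin.lt_def] at h2 h3
    omega
  have hother : ∀ a : Fin k, a ≠ c → a ≠ c' →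
      setIdx J hJcard a ≠ p ∧ setIdx J hJcard a ≠ q := by
    intro a hac hac'
    constructor
    · intro hcon; exact hac (hsm.injective (by rw [hcon, hcp]))
    · intro hcon; exact hac' (hsm.injective (by rw [hcon, hcq]))
  -- pass to superW
  have e2 : weightW r (σ * Equiv.swap p q) I hI
      = superW r (setIdx J hJcard) (tvar n k)
          ((fun b => zvar n k (σ b)) ∘ Equiv.swap p q) (hvar n k) := by
    unfold weightW
    congr 1
    exact setIdx_congr_s1 hJ2 _ _
  have e1 : weightW r σ I hI
      = superW r (setIdx J hJcard) (tvar n k) (fun b => zvar n k (σ b)) (hvar n k) := rfl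
  have master : weightW r (σ * Equiv.swap p q) I hI
      = (if r.1 then (zvar n k (σ p) - zvar n k (σ q) + hvar n k) /
            (zvar n k (σ q) - zvar n k (σ p) + hvar n k) else 1) * weightW r σ I hI := by
    rw [e2, e1]
    exact cruxW r (setIdx J hJcard) p q c c' hpq hcc hcp hcq hother
      (tvar n k) (fun b => zvar n k (σ b)) (hvar n k)
      (fun i j hij => ⟨tvar_sub_ne i j hij, tvar_sub_add_ne i j hij⟩)
      (zvar_sub_add_ne (σ q) (σ p) (fun hc => hpqne (σ.injective hc).symm))
      two_ne_zero
  constructor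
  · intro hr1
    rw [master, hr1]
    simp
  · intro hr1
    rw [master, hr1]
    simp
end
end

section
/- The matrix R^{(10)}(ζ) satisfies the parametrized Yang–Baxter equation: R^{(10)}_{12}(z_1−z_2) R^{(10)}_{13}(z_1−z_3) R^{(10)}_{23}(z_2−z_3) = R^{(10)}_{23}(z_2−z_3) R^{(10)}_{13}(z_1−z_3) R^{(10)}_{12}(z_1−z_2) as an identity of endomorphisms of (ℂ²)^{⊗3} with coefficients in ℂ(z_1,z_2,z_3,ℏ). -/
noncomputable section

/-- Variables `z₁, z₂, z₃, ℏ`. -/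
abbrev RVar : Type := Fin 3 ⊕ Unit

/-- The field `ℂ(z₁,z₂,z₃,ℏ)`. -/
abbrev RField : Type := FractionRing (MvPolynomial RVar ℂ)

def zR (i : Fin 3) : RField :=
  algebraMap (MvPolynomial RVar ℂ) RField (MvPolynomial.X (Sum.inl i))

def hR : RField :=
  algebraMap (MvPolynomial RVar ℂ) RField (MvPolynomial.X (Sum.inr ()))

/-- The 4×4 matrix, in the ordered basis `(v₁⊗v₁, v₁⊗v₂, v₂⊗v₁, v₂⊗v₂)` of `ℂ²⊗ℂ²`
(indexed by `Fin 2 × Fin 2`), with `(1,1)`-entry `a`, middle block `[[b,c],[c,b]]`,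
`(4,4)`-entry `d`, and all other entries `0`. -/
def rMatrix {K : Type*} [Field K] (a b c d : K) :
    Matrix (Fin 2 × Fin 2) (Fin 2 × Fin 2) K := fun p q =>
  if p = (0, 0) ∧ q = (0, 0) then a
  else if p = (0, 1) ∧ q = (0, 1) then b
  else if p = (0, 1) ∧ q = (1, 0) then c
  else if p = (1, 0) ∧ q = (0, 1) then c
  else if p = (1, 0) ∧ q = (1, 0) then b
  else if p = (1, 1) ∧ q = (1, 1) then d
  else 0

/-- The matrix `R^{(r)}(ζ)`, where `r = 00,10,01,11` is encoded as
`(false,false),(true,false),(false,true),(true,true)`:  the middle 2×2 block is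
`[[ζ/(ℏ-ζ), ℏ/(ℏ-ζ)],[ℏ/(ℏ-ζ), ζ/(ℏ-ζ)]]`, the `(1,1)` entry is `1` for `r ∈ {00,10}`
and `(ℏ+ζ)/(ℏ-ζ)` for `r ∈ {01,11}`, the `(4,4)` entry is `1` for `r ∈ {00,01}` and
`(ℏ+ζ)/(ℏ-ζ)` for `r ∈ {10,11}`. -/
def Rr (r : Bool × Bool) (ζ : RField) : Matrix (Fin 2 × Fin 2) (Fin 2 × Fin 2) RField :=
  rMatrix (if r.2 then (hR + ζ) / (hR - ζ) else 1) (ζ / (hR - ζ)) (hR / (hR - ζ))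
    (if r.1 then (hR + ζ) / (hR - ζ) else 1)

/-- The operator acting as `R` on the 1st and 2nd tensor factors of `(ℂ²)^{⊗3}`. -/
def op12 {K : Type*} [Field K] (R : Matrix (Fin 2 × Fin 2) (Fin 2 × Fin 2) K) :
    Matrix (Fin 2 × Fin 2 × Fin 2) (Fin 2 × Fin 2 × Fin 2) K := fun p q =>
  R (p.1, p.2.1) (q.1, q.2.1) * (if p.2.2 = q.2.2 then 1 else 0)

/-- The operator acting as `R` on the 1st and 3rd tensor factors of `(ℂ²)^{⊗3}`. -/
def op13 {K : Type*} [Field K] (R : Matrix (Fin 2 × Fin 2) (Fin 2 × Fin 2) K) :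
    Matrix (Fin 2 × Fin 2 × Fin 2) (Fin 2 × Fin 2 × Fin 2) K := fun p q =>
  R (p.1, p.2.2) (q.1, q.2.2) * (if p.2.1 = q.2.1 then 1 else 0)

/-- The operator acting as `R` on the 2nd and 3rd tensor factors of `(ℂ²)^{⊗3}`. -/
def op23 {K : Type*} [Field K] (R : Matrix (Fin 2 × Fin 2) (Fin 2 × Fin 2) K) :
    Matrix (Fin 2 × Fin 2 × Fin 2) (Fin 2 × Fin 2 × Fin 2) K := fun p q =>
  R (p.2.1, p.2.2) (q.2.1, q.2.2) * (if p.1 = q.1 then 1 else 0)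

set_option maxHeartbeats 1000000
set_option synthInstance.maxHeartbeats 400000

section
variable {K : Type*} [Field K] {a b c d : K}
lemma rE1 : rMatrix a b c d (0,0) (0,0) = a := rfl
lemma rE2 : rMatrix a b c d (0,0) (0,1) = 0 := rfl
lemma rE3 : rMatrix a b c d (0,0) (1,0) = 0 := rfl
lemma rE4 : rMatrix a b c d (0,0) (1,1) = 0 := rfl
lemma rE5 : rMatrix a b c d (0,1) (0,0) = 0 := rfl
lemma rE6 : rMatrix a b c d (0,1) (0,1) = b := rfl
lemma rE7 : rMatrix a b c d (0,1) (1,0) = c := rfl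
lemma rE8 : rMatrix a b c d (0,1) (1,1) = 0 := rfl
lemma rE9 : rMatrix a b c d (1,0) (0,0) = 0 := rfl
lemma rE10 : rMatrix a b c d (1,0) (0,1) = c := rfl
lemma rE11 : rMatrix a b c d (1,0) (1,0) = b := rfl
lemma rE12 : rMatrix a b c d (1,0) (1,1) = 0 := rfl
lemma rE13 : rMatrix a b c d (1,1) (0,0) = 0 := rfl
lemma rE14 : rMatrix a b c d (1,1) (0,1) = 0 := rfl
lemma rE15 : rMatrix a b c d (1,1) (1,0) = 0 := rfl
lemma rE16 : rMatrix a b c d (1,1) (1,1) = d := rfl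
end

lemma key_gen {K : Type*} [Field K] (h z1 z2 z3 : K) :
    (op12 (rMatrix (h - (z1 - z2)) (z1 - z2) h (h + (z1 - z2))) *
        op13 (rMatrix (h - (z1 - z3)) (z1 - z3) h (h + (z1 - z3))) *
        op23 (rMatrix (h - (z2 - z3)) (z2 - z3) h (h + (z2 - z3)))) =
      (op23 (rMatrix (h - (z2 - z3)) (z2 - z3) h (h + (z2 - z3))) *
        op13 (rMatrix (h - (z1 - z3)) (z1 - z3) h (h + (z1 - z3))) *
        op12 (rMatrix (h - (z1 - z2)) (z1 - z2) h (h + (z1 - z2)))) := by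
  ext ⟨p1, p2, p3⟩ ⟨q1, q2, q3⟩
  fin_cases p1 <;> fin_cases p2 <;> fin_cases p3 <;>
    fin_cases q1 <;> fin_cases q2 <;> fin_cases q3 <;>
  · simp only [show (⟨0, by omega⟩ : Fin 2) = 0 from rfl, show (⟨1, by omega⟩ : Fin 2) = 1 from rfl, Fin.mk_zero, Fin.mk_one, Fin.isValue, Matrix.mul_apply, Fintype.sum_prod_type, Fin.sum_univ_two,
      op12, op13, op23, rE1, rE2, rE3, rE4, rE5, rE6, rE7, rE8, rE9, rE10, rE11, rE12,
      rE13, rE14, rE15, rE16, if_true, mul_one, mul_zero, zero_mul, one_mul, add_zero, zero_add,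
      show ((0:Fin 2) = 1) = False by simp, show ((1:Fin 2) = 0) = False by simp,
      if_false, eq_self_iff_true]
    try ring

def Sm (ζ : RField) : Matrix (Fin 2 × Fin 2) (Fin 2 × Fin 2) RField :=
  rMatrix (hR - ζ) ζ hR (hR + ζ)

lemma hz_ne (i j : Fin 3) : hR - (zR i - zR j) ≠ 0 := by
  have hpoly : (MvPolynomial.X (Sum.inr ()) -
      (MvPolynomial.X (Sum.inl i) - MvPolynomial.X (Sum.inl j)) : MvPolynomial RVar ℂ) ≠ 0 := by
    intro h
    have := congrArg (MvPolynomial.eval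
      (fun v : RVar => if v = Sum.inr () then (1 : ℂ) else 0)) h
    simp at this
  intro h
  apply hpoly
  apply IsFractionRing.injective (MvPolynomial RVar ℂ) RField
  rw [map_zero, map_sub, map_sub]
  simpa [hR, zR] using h

lemma Rr_eq (ζ : RField) (h : hR - ζ ≠ 0) :
    Rr (true, false) ζ = (hR - ζ)⁻¹ • Sm ζ := by
  ext p q
  simp only [Rr, Sm, rMatrix, Matrix.smul_apply, smul_eq_mul]
  split_ifs <;> simp_all [div_eq_inv_mul, inv_mul_cancel₀ h]

lemma op12_smul (c : RField) (M : Matrix (Fin 2 × Fin 2) (Fin 2 × Fin 2) RField) :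
    op12 (c • M) = c • op12 M := by
  funext p q; simp [op12, Matrix.smul_apply, mul_assoc]

lemma op13_smul (c : RField) (M : Matrix (Fin 2 × Fin 2) (Fin 2 × Fin 2) RField) :
    op13 (c • M) = c • op13 M := by
  funext p q; simp [op13, Matrix.smul_apply, mul_assoc]

lemma op23_smul (c : RField) (M : Matrix (Fin 2 × Fin 2) (Fin 2 × Fin 2) RField) :
    op23 (c • M) = c • op23 M := by
  funext p q; simp [op23, Matrix.smul_apply, mul_assoc]

lemma smul_yb {K n : Type*} [Field K] [Fintype n] [DecidableEq n] (a b c : K)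
    (A B C : Matrix n n K) (h : A * B * C = C * B * A) :
    (a • A) * (b • B) * (c • C) = (c • C) * (b • B) * (a • A) := by
  simp only [Matrix.smul_mul, Matrix.mul_smul, smul_smul]
  rw [h]
  congr 1
  ring

lemma key :
    op12 (Sm (zR 0 - zR 1)) * op13 (Sm (zR 0 - zR 2)) * op23 (Sm (zR 1 - zR 2)) =
      op23 (Sm (zR 1 - zR 2)) * op13 (Sm (zR 0 - zR 2)) * op12 (Sm (zR 0 - zR 1)) := by
  have := key_gen hR (zR 0) (zR 1) (zR 2)
  simpa [Sm] using this

/-- **Statement**: the matrix `R^{(10)}(ζ)` satisfies the parametrized Yang–Baxter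
equation `R₁₂(z₁-z₂) R₁₃(z₁-z₃) R₂₃(z₂-z₃) = R₂₃(z₂-z₃) R₁₃(z₁-z₃) R₁₂(z₁-z₂)`
on `(ℂ²)^{⊗3}` with coefficients in `ℂ(z₁,z₂,z₃,ℏ)`. -/
theorem yangBaxter_R10 :
    op12 (Rr (true, false) (zR 0 - zR 1)) * op13 (Rr (true, false) (zR 0 - zR 2)) *
        op23 (Rr (true, false) (zR 1 - zR 2)) =
      op23 (Rr (true, false) (zR 1 - zR 2)) * op13 (Rr (true, false) (zR 0 - zR 2)) *
        op12 (Rr (true, false) (zR 0 - zR 1)) := by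
  rw [Rr_eq _ (hz_ne 0 1), Rr_eq _ (hz_ne 0 2), Rr_eq _ (hz_ne 1 2),
    op12_smul, op13_smul, op23_smul]
  exact smul_yb _ _ _ _ _ _ key
end
end

section
/- For every r ∈ {00,10,01,11}, every σ ∈ S_n and all I, J ∈ I_k, the substituted super weight function W^{(r)}_{σ,I}(z_J,z,ℏ) is a polynomial, i.e. it lies in the polynomial subring ℂ[z_1,…,z_n,ℏ] of ℂ(z_1,…,z_n,ℏ). -/
open Finset

noncomputable section

open scoped Classical

/-- Variables `z₁,…,z_n`, `ℏ`. -/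
abbrev ZVar (n : ℕ) : Type := Fin n ⊕ Unit

/-- The field `ℂ(z₁,…,z_n,ℏ)`. -/
abbrev ZField (n : ℕ) : Type := FractionRing (MvPolynomial (ZVar n) ℂ)

def zval (n : ℕ) (b : Fin n) : ZField n :=
  algebraMap (MvPolynomial (ZVar n) ℂ) (ZField n) (MvPolynomial.X (Sum.inl b))

def hval (n : ℕ) : ZField n :=
  algebraMap (MvPolynomial (ZVar n) ℂ) (ZField n) (MvPolynomial.X (Sum.inr ()))

/-- The substitution `W^{(r)}_{σ,J}(z_I, z, ℏ) ∈ ℂ(z₁,…,z_n,ℏ)`: substitute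
`t_s = z_{i_s}` (where `I = {i_1 < … < i_k}`) into each of the `k!` terms of the
symmetrization defining `W^{(r)}_{σ,J}`, and sum the substituted terms. -/
def weightWSub (r : Bool × Bool) {n k : ℕ} (σ : Equiv.Perm (Fin n))
    (J : Finset (Fin n)) (hJ : J.card = k)
    (I : Finset (Fin n)) (hI : I.card = k) : ZField n :=
  ∑ τ : Equiv.Perm (Fin k),
    superU r (setIdx (J.map σ.symm.toEmbedding) (by rw [Finset.card_map]; exact hJ))
      (fun a => zval n (setIdx I hI (τ a))) (fun b => zval n (σ b)) (hval n)


set_option maxHeartbeats 2000000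
set_option synthInstance.maxHeartbeats 400000

namespace WWaux
open MvPolynomial

variable {n : ℕ}

abbrev Rp (n : ℕ) : Type := MvPolynomial (Fin n ⊕ Unit) ℂ

def Zv (u : Fin n) : Rp n := X (Sum.inl u)
def Hv (n : ℕ) : Rp n := X (Sum.inr ())

/-- linear factor `z_u - z_v + c·h` -/
def lin (u v : Fin n) (c : Bool) : Rp n := Zv u - Zv v + (cond c (Hv n) 0)

lemma prime_X_any {T : Type*} (v : T) : Prime (X v : MvPolynomial T ℂ) := by
  classical
  let e : Option {t : T // t ≠ v} ≃ T := Equiv.optionSubtypeNe v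
  rw [← MulEquiv.prime_iff (renameEquiv ℂ e.symm).toMulEquiv (p := (X v : MvPolynomial T ℂ))]
  show Prime ((renameEquiv ℂ e.symm) (X v : MvPolynomial T ℂ))
  rw [renameEquiv_apply, rename_X]
  have hv : e.symm v = none := Equiv.optionSubtypeNe_symm_self v
  rw [← MulEquiv.prime_iff (optionEquivLeft ℂ {t : T // t ≠ v}).toMulEquiv]
  show Prime ((optionEquivLeft ℂ {t : T // t ≠ v}) (X (e.symm v)))
  rw [hv, optionEquivLeft_X_none]
  exact Polynomial.prime_X

lemma prime_Hv : Prime (Hv n) := prime_X_any _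

lemma prime_lin {u v : Fin n} (huv : u ≠ v) (c : Bool) : Prime (lin u v c) := by
  classical
  set cH : Rp n := cond c (Hv n) 0 with hcH
  let g : (Fin n ⊕ Unit) → Rp n := fun w =>
    if w = Sum.inl u then X (Sum.inl u) - X (Sum.inl v) + cH else X w
  let g' : (Fin n ⊕ Unit) → Rp n := fun w =>
    if w = Sum.inl u then X (Sum.inl u) + X (Sum.inl v) - cH else X w
  have hginlu : g (Sum.inl u) = X (Sum.inl u) - X (Sum.inl v) + cH := if_pos rfl
  have hg'inlu : g' (Sum.inl u) = X (Sum.inl u) + X (Sum.inl v) - cH := if_pos rfl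
  have hgv : g (Sum.inl v) = X (Sum.inl v) := if_neg (by simp [huv.symm])
  have hg'v : g' (Sum.inl v) = X (Sum.inl v) := if_neg (by simp [huv.symm])
  have hgcH : aeval g cH = cH := by
    cases c <;> simp [hcH, Hv, g, aeval_X]
  have hg'cH : aeval g' cH = cH := by
    cases c <;> simp [hcH, Hv, g', aeval_X]
  have hgg' : ∀ w, aeval g (g' w) = X w := by
    intro w
    by_cases hw : w = Sum.inl u
    · subst hw
      rw [hg'inlu, map_sub, map_add, aeval_X, aeval_X, hginlu, hgv, hgcH]; ring
    · rw [show g' w = X w from if_neg hw, aeval_X, show g w = X w from if_neg hw]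
  have hg'g : ∀ w, aeval g' (g w) = X w := by
    intro w
    by_cases hw : w = Sum.inl u
    · subst hw
      rw [hginlu, map_add, map_sub, aeval_X, aeval_X, hg'inlu, hg'v, hg'cH]; ring
    · rw [show g w = X w from if_neg hw, aeval_X, show g' w = X w from if_neg hw]
  let E : Rp n ≃ₐ[ℂ] Rp n := AlgEquiv.ofAlgHom (aeval g) (aeval g')
    (by apply MvPolynomial.algHom_ext; intro w
        simp only [AlgHom.coe_comp, Function.comp_apply, aeval_X, AlgHom.id_apply]
        exact hgg' w)
    (by apply MvPolynomial.algHom_ext; intro w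
        simp only [AlgHom.coe_comp, Function.comp_apply, aeval_X, AlgHom.id_apply]
        exact hg'g w)
  have hP := (MulEquiv.prime_iff E.toMulEquiv (p := (X (Sum.inl u) : Rp n))).symm
  have hEX : E.toMulEquiv (X (Sum.inl u)) = lin u v c := by
    show (aeval g) (X (Sum.inl u)) = _
    rw [aeval_X, hginlu]; rfl
  rw [hEX] at hP
  exact hP.mp (prime_X_any _)

lemma not_dvd_of_eval {f g : Rp n} (ξ : (Fin n ⊕ Unit) → ℂ)
    (h0 : eval ξ f = 0) (h1 : eval ξ g ≠ 0) : ¬ f ∣ g := by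
  rintro ⟨m, rfl⟩
  rw [map_mul, h0, zero_mul] at h1
  exact h1 rfl

/-- non-divisibility among `z_u - z_v` factors -/
lemma lin0_not_dvd {u v u' v' m : Fin n} (hu'v' : u' ≠ v')
    (hm : m = u' ∨ m = v') (hmu : m ≠ u) (hmv : m ≠ v) :
    ¬ lin u v false ∣ lin u' v' false := by
  apply not_dvd_of_eval (Sum.elim (fun x => if x = m then 1 else 0) (fun _ => 0))
  · simp only [lin, cond, map_add, map_sub, map_zero, Zv, eval_X, Sum.elim_inl]
    rw [if_neg (fun h => hmu h.symm), if_neg (fun h => hmv h.symm)]; ring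
  · simp only [lin, cond, map_add, map_sub, map_zero, Zv, eval_X, Sum.elim_inl]
    rcases hm with rfl | rfl
    · rw [if_pos rfl, if_neg (fun h => hu'v' (h.symm))]; norm_num
    · rw [if_neg (fun h => hu'v' h), if_pos rfl]; norm_num

/-- non-divisibility among `z_u - z_v + h` factors -/
lemma lin1_not_dvd {u v u' v' : Fin n} (huv : u ≠ v) (hne : (u, v) ≠ (u', v')) :
    ¬ lin u v true ∣ lin u' v' true := by
  apply not_dvd_of_eval
    (Sum.elim (fun x => if x = v then 1 else if x = u then 0 else 3) (fun _ => 1))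
  · simp only [lin, cond, map_add, map_sub, Zv, Hv, eval_X, Sum.elim_inl, Sum.elim_inr]
    norm_num [huv]
  · simp only [lin, cond, map_add, map_sub, Zv, Hv, eval_X, Sum.elim_inl, Sum.elim_inr]
    have hne' : ¬ (u' = u ∧ v' = v) := fun ⟨h1, h2⟩ => hne (by rw [h1, h2])
    by_cases h1 : u' = v <;> by_cases h2 : v' = v <;>
      by_cases h4 : u' = u <;> by_cases h3 : v' = u <;>
      simp_all <;> norm_num
  
/-- product of pairwise non-associate primes divides -/
lemma prod_primes_dvd {α : Type*} [CommMonoidWithZero α] {ι : Type*}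
    (s : Finset ι) (f : ι → α) (N : α)
    (hp : ∀ i ∈ s, Prime (f i))
    (hnd : ∀ i ∈ s, ∀ j ∈ s, i ≠ j → ¬ f i ∣ f j)
    (hd : ∀ i ∈ s, f i ∣ N) : (∏ i ∈ s, f i) ∣ N := by
  classical
  induction s using Finset.induction_on generalizing N with
  | empty => simpa using one_dvd N
  | @insert a s ha ih =>
    rw [Finset.prod_insert ha]
    obtain ⟨m, rfl⟩ := hd a (mem_insert_self a s)
    refine mul_dvd_mul_left _ (ih m (fun i hi => hp i (mem_insert_of_mem hi))
      (fun i hi j hj hij => hnd i (mem_insert_of_mem hi) j (mem_insert_of_mem hj) hij)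
      (fun i hi => ?_))
    have hdvd := hd i (mem_insert_of_mem hi)
    rcases (hp i (mem_insert_of_mem hi)).dvd_or_dvd hdvd with h | h
    · exact absurd h (hnd i (mem_insert_of_mem hi) a (mem_insert_self a s)
        (fun h => ha (h ▸ hi)))
    · exact h


-- ### kernel of the substitution z_q ↦ z_p
/-- the variable substitution collapsing `q` to `p` -/
def rho (p q : Fin n) : (Fin n ⊕ Unit) → (Fin n ⊕ Unit) :=
  fun w => if w = Sum.inl q then Sum.inl p else w

lemma rho_inl_q (p q : Fin n) : rho p q (Sum.inl q) = Sum.inl p := if_pos rfl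
lemma rho_inl_p (p q : Fin n) (hpq : p ≠ q) : rho p q (Sum.inl p) = Sum.inl p :=
  if_neg (by simp [hpq])

lemma lin_dvd_sub_rename (p q : Fin n) (m : Rp n) :
    lin q p false ∣ (m - rename (rho p q) m) := by
  have key : ∀ w, lin q p false ∣ (X w - X (rho p q w) : Rp n) := by
    intro w
    by_cases hw : w = Sum.inl q
    · subst hw
      rw [rho_inl_q]
      exact dvd_of_eq (by simp [lin, Zv])
    · rw [show rho p q w = w from if_neg hw, sub_self]
      exact dvd_zero _
  induction m using MvPolynomial.induction_on with
  | C a => simp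
  | add f g hf hg =>
    rw [map_add]
    have : f + g - (rename (rho p q) f + rename (rho p q) g)
        = (f - rename (rho p q) f) + (g - rename (rho p q) g) := by ring
    rw [this]; exact dvd_add hf hg
  | mul_X f w hf =>
    rw [map_mul, rename_X]
    have : f * X w - rename (rho p q) f * X (rho p q w)
        = (f - rename (rho p q) f) * X w
          + rename (rho p q) f * (X w - X (rho p q w)) := by ring
    rw [this]
    exact dvd_add (Dvd.dvd.mul_right hf _) (Dvd.dvd.mul_left (key w) _)

lemma rename_eq_zero_of_lin_dvd (p q : Fin n) (hpq : p ≠ q) {s : Rp n}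
    (h : lin q p false ∣ s) : rename (rho p q) s = 0 := by
  obtain ⟨t, rfl⟩ := h
  rw [map_mul]
  have : rename (rho p q) (lin q p false) = 0 := by
    simp [lin, Zv, rename_X, rho_inl_q, rho_inl_p p q hpq]
  rw [this, zero_mul]

lemma lin_dvd_of_rename_eq_zero (p q : Fin n) {s : Rp n}
    (h : rename (rho p q) s = 0) : lin q p false ∣ s := by
  have := lin_dvd_sub_rename p q s
  rwa [h, sub_zero] at this

-- ### the set of fractions with no pole along `z_q = z_p`
def Ol (p q : Fin n) : Set (FractionRing (Rp n)) :=
  {x | ∃ a s : Rp n, rename (rho p q) s ≠ 0 ∧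
    x = algebraMap (Rp n) (FractionRing (Rp n)) a / algebraMap (Rp n) (FractionRing (Rp n)) s}

lemma phi_ne_zero {s : Rp n} (hs : s ≠ 0) :
    algebraMap (Rp n) (FractionRing (Rp n)) s ≠ 0 := by
  intro h
  exact hs (IsFractionRing.injective (Rp n) (FractionRing (Rp n)) (by simpa using h))

lemma Ol_zero (p q : Fin n) : (0 : FractionRing (Rp n)) ∈ Ol p q :=
  ⟨0, 1, by simp, by simp⟩

lemma Ol_add (p q : Fin n) {x y : FractionRing (Rp n)}
    (hx : x ∈ Ol p q) (hy : y ∈ Ol p q) : x + y ∈ Ol p q := by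
  obtain ⟨a, s, hs, rfl⟩ := hx
  obtain ⟨b, t, ht, rfl⟩ := hy
  refine ⟨a * t + b * s, s * t, by rw [map_mul]; exact mul_ne_zero hs ht, ?_⟩
  have hs0 : s ≠ 0 := fun h => hs (by rw [h, map_zero])
  have ht0 : t ≠ 0 := fun h => ht (by rw [h, map_zero])
  rw [map_add, map_mul, map_mul, map_mul]
  field_simp [phi_ne_zero hs0, phi_ne_zero ht0]

lemma Ol_sum (p q : Fin n) {ι : Type*} (t : Finset ι) (f : ι → FractionRing (Rp n))
    (h : ∀ i ∈ t, f i ∈ Ol p q) : (∑ i ∈ t, f i) ∈ Ol p q := by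
  classical
  induction t using Finset.induction_on with
  | empty => simpa using Ol_zero p q
  | @insert a s ha ih =>
    rw [Finset.sum_insert ha]
    exact Ol_add p q (h a (mem_insert_self a s))
      (ih (fun i hi => h i (mem_insert_of_mem hi)))

lemma Ol_half (p q : Fin n) {x : FractionRing (Rp n)}
    (hx : x ∈ Ol p q) : x / 2 ∈ Ol p q := by
  obtain ⟨a, s, hs, rfl⟩ := hx
  refine ⟨a, s * 2, ?_, ?_⟩
  · rw [map_mul]
    intro h
    rcases mul_eq_zero.mp h with h | h
    · exact hs h
    · rw [map_ofNat] at h; norm_num at h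
  · rw [map_mul, div_div, map_ofNat]

/-- extraction: if `S` has no pole along `z_q = z_p` and `φ V * S = φ c` with
`ℓ = z_q - z_p` dividing `V`, then `ℓ ∣ c`. -/
lemma lin_dvd_of_Ol (p q : Fin n) (hpq : p ≠ q) {S : FractionRing (Rp n)} {V c : Rp n}
    (hS : S ∈ Ol p q) (hV : algebraMap (Rp n) (FractionRing (Rp n)) V * S
      = algebraMap (Rp n) (FractionRing (Rp n)) c)
    (hl : lin q p false ∣ V) : lin q p false ∣ c := by
  obtain ⟨a, s, hs, rfl⟩ := hS
  have hs0 : s ≠ 0 := fun h => hs (by rw [h, map_zero])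
  have hVa : V * a = c * s := by
    apply IsFractionRing.injective (Rp n) (FractionRing (Rp n))
    rw [map_mul, map_mul]
    field_simp [phi_ne_zero hs0] at hV ⊢
    linear_combination hV
  have hdvd : lin q p false ∣ c * s := hVa ▸ hl.mul_right a
  have hprime : Prime (lin q p false) := prime_lin (by simp [hpq.symm]) false
  rcases hprime.dvd_or_dvd hdvd with h | h
  · exact h
  · exact absurd (rename_eq_zero_of_lin_dvd p q hpq h) hs

-- ### Vandermonde sign lemma
lemma vandermonde_perm_sign {A : Type*} [CommRing A] {k : ℕ}
    (τ : Equiv.Perm (Fin k)) (v : Fin k → A) :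
    (∏ a : Fin k, ∏ b ∈ univ.filter (fun b => a < b), (v (τ b) - v (τ a)))
      = ((Equiv.Perm.sign τ : ℤ) : A)
        * ∏ a : Fin k, ∏ b ∈ univ.filter (fun b => a < b), (v b - v a) := by
  have hIoi : ∀ a : Fin k, univ.filter (fun b => a < b) = Ioi a := by
    intro a; ext b; simp
  simp only [hIoi]
  have h1 : (∏ a : Fin k, ∏ b ∈ Ioi a, (v (τ b) - v (τ a)))
      = Matrix.det (Matrix.vandermonde (v ∘ τ)) := (Matrix.det_vandermonde _).symm
  have h2 : (∏ a : Fin k, ∏ b ∈ Ioi a, (v b - v a))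
      = Matrix.det (Matrix.vandermonde v) := (Matrix.det_vandermonde _).symm
  rw [h1, h2]
  have h3 : Matrix.vandermonde (v ∘ τ) = (Matrix.vandermonde v).submatrix τ id := by
    ext i j; simp [Matrix.vandermonde]
  rw [h3, Matrix.det_permute]

-- ### reshaping nested pair products
def PP (k : ℕ) : Finset (Fin k × Fin k) :=
  (univ ×ˢ univ).filter (fun x : Fin k × Fin k => x.1 < x.2)

lemma prod_pairs {M : Type*} [CommMonoid M] {k : ℕ} (f : Fin k → Fin k → M) :
    (∏ a : Fin k, ∏ b ∈ univ.filter (fun b => a < b), f a b)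
      = ∏ x ∈ PP k, f x.1 x.2 := by
  rw [PP, Finset.prod_filter, Finset.prod_product]
  refine Finset.prod_congr rfl (fun a _ => ?_)
  rw [Finset.prod_filter]



-- ### polynomial normal forms for the substituted weight terms
section NormalForm

variable {n k : ℕ}

local notation "φ" => algebraMap (Rp n) (FractionRing (Rp n))

def nmA (r : Bool × Bool) (idx w : Fin k → Fin n) (s : Fin n → Fin n) : Rp n :=
  ∏ a : Fin k,
    ((∏ b ∈ univ.filter (fun b : Fin n => b < idx a),
        (if r.2 then Zv (s b) - Zv (w a) + Hv n else Zv (w a) - Zv (s b) + Hv n)) *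
     (∏ b ∈ univ.filter (fun b : Fin n => idx a < b), (Zv (s b) - Zv (w a))))

def pairHk (w : Fin k → Fin n) : Rp n :=
  ∏ a : Fin k, ∏ b ∈ univ.filter (fun b : Fin k => a < b), (Zv (w b) - Zv (w a) + Hv n)

def Vdk (w : Fin k → Fin n) : Rp n :=
  ∏ a : Fin k, ∏ b ∈ univ.filter (fun b : Fin k => a < b), (Zv (w b) - Zv (w a))

def exNn (n k : ℕ) (s : Fin n → Fin n) : Rp n :=
  Hv n ^ k *
    ∏ a : Fin n, ∏ b ∈ univ.filter (fun b : Fin n => a < b), (Zv (s b) - Zv (s a) + Hv n)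

def exDk (w : Fin k → Fin n) (s : Fin n → Fin n) : Rp n :=
  ∏ a : Fin k, ∏ b : Fin n, (Zv (s b) - Zv (w a) + Hv n)

def numP (r : Bool × Bool) (idx w : Fin k → Fin n) (s : Fin n → Fin n) : Rp n :=
  nmA r idx w s * (if r = (true, true) then pairHk w else 1) *
    (if r.2 then exNn n k s else 1)

def denP (r : Bool × Bool) (idx w : Fin k → Fin n) (s : Fin n → Fin n) : Rp n :=
  Vdk w * (if r = (false, false) then pairHk w else 1) * (if r.2 then exDk w s else 1)

lemma superU_eq (r : Bool × Bool) (idx w : Fin k → Fin n) (s : Fin n → Fin n) :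
    superU r idx (fun a => φ (Zv (w a))) (fun b => φ (Zv (s b))) (φ (Hv n))
      = φ (numP r idx w s) / φ (denP r idx w s) := by
  rcases r with ⟨r1, r2⟩
  cases r1 <;> cases r2 <;>
  · simp only [superU, tPairFactor, numP, denP, nmA, pairHk, Vdk, exNn, exDk,
      map_prod, map_mul, map_sub, map_add, map_pow, map_one,
      if_true, if_false, Bool.false_eq_true, Bool.true_eq_false, ite_true, ite_false,
      Prod.mk.injEq, and_self, and_true, and_false, one_mul, mul_one,
      one_div, mul_inv, Finset.prod_mul_distrib, Finset.prod_inv_distrib,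
      div_eq_mul_inv]
    try ring

end NormalForm

-- ### basic nonvanishing facts
section Facts
variable {n k : ℕ}

lemma lin_false_eq (u v : Fin n) : lin u v false = Zv u - Zv v := by simp [lin]
lemma lin_true_eq (u v : Fin n) : lin u v true = Zv u - Zv v + Hv n := by simp [lin]

lemma prime_zsub {u v : Fin n} (huv : u ≠ v) : Prime (Zv u - Zv v) := by
  rw [← lin_false_eq]; exact prime_lin huv false

lemma prime_fac {u v : Fin n} (huv : u ≠ v) : Prime (Zv u - Zv v + Hv n) := by
  rw [← lin_true_eq]; exact prime_lin huv true

lemma zsub_ne_zero {u v : Fin n} (huv : u ≠ v) : Zv u - Zv v ≠ 0 :=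
  (prime_zsub huv).ne_zero

lemma fac_ne_zero (u v : Fin n) : Zv u - Zv v + Hv n ≠ 0 := by
  rcases eq_or_ne u v with rfl | huv
  · simpa using prime_Hv.ne_zero
  · exact (prime_fac huv).ne_zero

lemma pairHk_ne_zero {w : Fin k → Fin n} : pairHk w ≠ 0 := by
  rw [pairHk, Finset.prod_ne_zero_iff]
  intro a _
  rw [Finset.prod_ne_zero_iff]
  intro b _
  exact fac_ne_zero _ _

lemma Vdk_ne_zero {w : Fin k → Fin n} (hw : Function.Injective w) : Vdk w ≠ 0 := by
  rw [Vdk, Finset.prod_ne_zero_iff]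
  intro a _
  rw [Finset.prod_ne_zero_iff]
  intro b hb
  simp only [mem_filter] at hb
  exact zsub_ne_zero (fun h => hb.2.ne' (hw h))

lemma exDk_ne_zero {w : Fin k → Fin n} {s : Fin n → Fin n} : exDk w s ≠ 0 := by
  rw [exDk, Finset.prod_ne_zero_iff]
  intro a _
  rw [Finset.prod_ne_zero_iff]
  intro b _
  exact fac_ne_zero _ _

end Facts

-- ### the h-shifted denominator factors divide the numerator, termwise
section Bdvd
variable {n k : ℕ}

/-- the `h`-shifted part of the denominator -/
def Bden (r : Bool × Bool) (w : Fin k → Fin n) (s : Fin n → Fin n) : Rp n :=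
  (if r = (false, false) then pairHk w else 1) * (if r.2 then exDk w s else 1)

lemma denP_eq (r : Bool × Bool) (idx w : Fin k → Fin n) (s : Fin n → Fin n) :
    denP r idx w s = Vdk w * Bden r w s := by
  rw [denP, Bden, mul_assoc]

lemma Bden_ne_zero (r : Bool × Bool) {w : Fin k → Fin n} {s : Fin n → Fin n} :
    Bden r w s ≠ 0 := by
  rw [Bden]
  refine mul_ne_zero ?_ ?_ <;> split_ifs
  · exact pairHk_ne_zero
  · exact one_ne_zero
  · exact exDk_ne_zero
  · exact one_ne_zero

lemma denP_ne_zero (r : Bool × Bool) {idx w : Fin k → Fin n} {s : Fin n → Fin n}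
    (hw : Function.Injective w) : denP r idx w s ≠ 0 := by
  rw [denP_eq]
  exact mul_ne_zero (Vdk_ne_zero hw) (Bden_ne_zero r)

lemma exDk_split (w : Fin k → Fin n) (σ : Equiv.Perm (Fin n)) :
    exDk w ⇑σ = Hv n ^ k *
      ∏ a : Fin k, ∏ b ∈ univ.erase (σ.symm (w a)), (Zv (σ b) - Zv (w a) + Hv n) := by
  rw [exDk]
  have step : ∀ a : Fin k, (∏ b : Fin n, (Zv (σ b) - Zv (w a) + Hv n))
      = Hv n * ∏ b ∈ univ.erase (σ.symm (w a)), (Zv (σ b) - Zv (w a) + Hv n) := by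
    intro a
    rw [← Finset.mul_prod_erase univ _ (mem_univ (σ.symm (w a)))]
    congr 1
    rw [Equiv.apply_symm_apply, sub_self, zero_add]
  simp only [step]
  rw [Finset.prod_mul_distrib, Finset.prod_const, Finset.card_univ, Fintype.card_fin]

lemma B_dvd (r : Bool × Bool) (idx w : Fin k → Fin n) (σ : Equiv.Perm (Fin n))
    (hw : Function.Injective w) (hidx : StrictMono idx) :
    Bden r w ⇑σ ∣ numP r idx w ⇑σ := by
  by_cases hsur : ∀ a b, idx a < b → σ b ≠ w a
  case neg =>
    -- dead term: the numerator vanishes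
    push_neg at hsur
    obtain ⟨a, b, hab, hba⟩ := hsur
    have h0 : nmA r idx w ⇑σ = 0 := by
      apply Finset.prod_eq_zero (mem_univ a)
      apply mul_eq_zero_of_right
      apply Finset.prod_eq_zero (i := b)
      · simp only [mem_filter, mem_univ, true_and]; exact hab
      · rw [hba, sub_self]
    rw [numP, h0, zero_mul, zero_mul]
    exact dvd_zero _
  case pos =>
    have hc : ∀ a, σ.symm (w a) ≤ idx a := by
      intro a
      by_contra h
      push_neg at h
      exact hsur a _ h (σ.apply_symm_apply (w a))
    -- the fundamental matched factors
    have hwne : ∀ {x1 x2 : Fin k}, x1 < x2 → w x2 ≠ w x1 :=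
      fun {x1 x2} h12 he => absurd (hw he) h12.ne'
    rcases r with ⟨r1, r2⟩
    cases r1 <;> cases r2
    · -- r = (false, false)
      have hred : Bden (false, false) w ⇑σ = pairHk w := by
        simp [Bden]
      rw [hred, numP, if_neg (by simp), if_neg (by simp), mul_one, mul_one,
        pairHk, prod_pairs]
      apply prod_primes_dvd
      · intro x hx
        simp only [PP, mem_filter] at hx
        exact prime_fac (hwne hx.2)
      · intro x hx y hy hxy
        simp only [PP, mem_filter] at hx hy
        rw [← lin_true_eq, ← lin_true_eq]
        apply lin1_not_dvd (hwne hx.2)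
        intro h
        apply hxy
        have h1 : w x.2 = w y.2 := congrArg Prod.fst h
        have h2 : w x.1 = w y.1 := congrArg Prod.snd h
        exact Prod.ext (hw h2) (hw h1)
      · intro x hx
        simp only [PP, mem_filter] at hx
        have hmem : σ.symm (w x.1) ∈ univ.filter (fun b : Fin n => b < idx x.2) := by
          simp only [mem_filter, mem_univ, true_and]
          exact lt_of_le_of_lt (hc x.1) (hidx hx.2)
        have h1 : (Zv (w x.2) - Zv (σ (σ.symm (w x.1))) + Hv n)
            ∣ ∏ b ∈ univ.filter (fun b : Fin n => b < idx x.2),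
                (Zv (w x.2) - Zv (σ b) + Hv n) :=
          Finset.dvd_prod_of_mem (fun b => Zv (w x.2) - Zv (σ b) + Hv n) hmem
        rw [Equiv.apply_symm_apply] at h1
        have h2 := dvd_mul_of_dvd_left h1
          (∏ b ∈ univ.filter (fun b : Fin n => idx x.2 < b), (Zv (σ b) - Zv (w x.2)))
        refine dvd_trans h2 ?_
        have h3 := Finset.dvd_prod_of_mem
          (fun a => ((∏ b ∈ univ.filter (fun b : Fin n => b < idx a),
              (Zv (w a) - Zv (σ b) + Hv n)) *
            (∏ b ∈ univ.filter (fun b : Fin n => idx a < b), (Zv (σ b) - Zv (w a)))))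
          (mem_univ x.2)
        rw [nmA]
        simp only [Bool.false_eq_true, if_false]
        exact h3
    · -- r = (false, true)
      have hred : Bden (false, true) w ⇑σ = exDk w ⇑σ := by
        simp [Bden]
      rw [hred, numP, if_neg (by simp), mul_one, if_pos rfl, exNn, exDk_split w σ,
        show nmA (false, true) idx w ⇑σ *
            (Hv n ^ k * ∏ a : Fin n, ∏ b ∈ univ.filter (fun b : Fin n => a < b),
              (Zv (σ b) - Zv (σ a) + Hv n))
          = Hv n ^ k * (nmA (false, true) idx w ⇑σ *
            ∏ a : Fin n, ∏ b ∈ univ.filter (fun b : Fin n => a < b),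
              (Zv (σ b) - Zv (σ a) + Hv n)) from by ring]
      apply mul_dvd_mul_left
      rw [Finset.prod_sigma' univ (fun a : Fin k => univ.erase (σ.symm (w a)))
        (fun a b => Zv (σ b) - Zv (w a) + Hv n)]
      apply prod_primes_dvd
      · intro x hx
        simp only [Finset.mem_sigma, Finset.mem_erase] at hx
        refine prime_fac (fun h => hx.2.1 ?_)
        rw [← h]; simp
      · intro x hx y hy hxy
        simp only [Finset.mem_sigma, Finset.mem_erase] at hx hy
        rw [← lin_true_eq, ← lin_true_eq]
        refine lin1_not_dvd (fun h => hx.2.1 (by rw [← h]; simp)) ?_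
        intro h
        have h1 : σ x.2 = σ y.2 := congrArg Prod.fst h
        have h2 : w x.1 = w y.1 := congrArg Prod.snd h
        have hx1 : x.1 = y.1 := hw h2
        have hx2 : x.2 = y.2 := σ.injective h1
        exact hxy (Sigma.ext hx1 (heq_of_eq hx2))
      · intro x hx
        simp only [Finset.mem_sigma, Finset.mem_erase] at hx
        by_cases hbx : x.2 < idx x.1
        · refine dvd_mul_of_dvd_left ?_ _
          have h1 : (Zv (σ x.2) - Zv (w x.1) + Hv n)
              ∣ ∏ b ∈ univ.filter (fun b : Fin n => b < idx x.1),
                  (Zv (σ b) - Zv (w x.1) + Hv n) :=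
            Finset.dvd_prod_of_mem _ (by simp only [mem_filter, mem_univ, true_and]; exact hbx)
          have h2 := dvd_mul_of_dvd_left h1
            (∏ b ∈ univ.filter (fun b : Fin n => idx x.1 < b), (Zv (σ b) - Zv (w x.1)))
          refine dvd_trans h2 ?_
          have h3 := Finset.dvd_prod_of_mem
            (fun a => ((∏ b ∈ univ.filter (fun b : Fin n => b < idx a),
                (Zv (σ b) - Zv (w a) + Hv n)) *
              (∏ b ∈ univ.filter (fun b : Fin n => idx a < b), (Zv (σ b) - Zv (w a)))))
            (mem_univ x.1)
          rw [nmA]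
          simp only [if_true]
          exact h3
        · refine dvd_mul_of_dvd_right ?_ _
          have hcx : σ.symm (w x.1) < x.2 := by
            rcases lt_or_eq_of_le (le_trans (hc x.1) (not_lt.mp hbx)) with h | h
            · exact h
            · exact absurd h.symm hx.2.1
          have h1 : (Zv (σ x.2) - Zv (σ (σ.symm (w x.1))) + Hv n)
              ∣ ∏ b ∈ univ.filter (fun b : Fin n => σ.symm (w x.1) < b),
                  (Zv (σ b) - Zv (σ (σ.symm (w x.1))) + Hv n) :=
            Finset.dvd_prod_of_mem _ (by simp only [mem_filter, mem_univ, true_and]; exact hcx)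
          have h2 := dvd_trans h1 (Finset.dvd_prod_of_mem
            (fun a => ∏ b ∈ univ.filter (fun b : Fin n => a < b),
              (Zv (σ b) - Zv (σ a) + Hv n)) (mem_univ (σ.symm (w x.1))))
          rwa [Equiv.apply_symm_apply] at h2
    · -- r = (true, false)
      have hred : Bden (true, false) w ⇑σ = 1 := by simp [Bden]
      rw [hred]
      exact one_dvd _
    · -- r = (true, true)
      have hred : Bden (true, true) w ⇑σ = exDk w ⇑σ := by
        simp [Bden]
      rw [hred, numP, if_pos rfl, if_pos rfl, exNn, exDk_split w σ,
        show nmA (true, true) idx w ⇑σ * pairHk w *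
            (Hv n ^ k * ∏ a : Fin n, ∏ b ∈ univ.filter (fun b : Fin n => a < b),
              (Zv (σ b) - Zv (σ a) + Hv n))
          = Hv n ^ k * (nmA (true, true) idx w ⇑σ * pairHk w *
            ∏ a : Fin n, ∏ b ∈ univ.filter (fun b : Fin n => a < b),
              (Zv (σ b) - Zv (σ a) + Hv n)) from by ring]
      apply mul_dvd_mul_left
      rw [Finset.prod_sigma' univ (fun a : Fin k => univ.erase (σ.symm (w a)))
        (fun a b => Zv (σ b) - Zv (w a) + Hv n)]
      apply prod_primes_dvd
      · intro x hx
        simp only [Finset.mem_sigma, Finset.mem_erase] at hx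
        refine prime_fac (fun h => hx.2.1 ?_)
        rw [← h]; simp
      · intro x hx y hy hxy
        simp only [Finset.mem_sigma, Finset.mem_erase] at hx hy
        rw [← lin_true_eq, ← lin_true_eq]
        refine lin1_not_dvd (fun h => hx.2.1 (by rw [← h]; simp)) ?_
        intro h
        have h1 : σ x.2 = σ y.2 := congrArg Prod.fst h
        have h2 : w x.1 = w y.1 := congrArg Prod.snd h
        have hx1 : x.1 = y.1 := hw h2
        have hx2 : x.2 = y.2 := σ.injective h1
        exact hxy (Sigma.ext hx1 (heq_of_eq hx2))
      · intro x hx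
        simp only [Finset.mem_sigma, Finset.mem_erase] at hx
        by_cases hbx : x.2 < idx x.1
        · refine dvd_mul_of_dvd_left (dvd_mul_of_dvd_left ?_ _) _
          have h1 : (Zv (σ x.2) - Zv (w x.1) + Hv n)
              ∣ ∏ b ∈ univ.filter (fun b : Fin n => b < idx x.1),
                  (Zv (σ b) - Zv (w x.1) + Hv n) :=
            Finset.dvd_prod_of_mem _ (by simp only [mem_filter, mem_univ, true_and]; exact hbx)
          have h2 := dvd_mul_of_dvd_left h1
            (∏ b ∈ univ.filter (fun b : Fin n => idx x.1 < b), (Zv (σ b) - Zv (w x.1)))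
          refine dvd_trans h2 ?_
          have h3 := Finset.dvd_prod_of_mem
            (fun a => ((∏ b ∈ univ.filter (fun b : Fin n => b < idx a),
                (Zv (σ b) - Zv (w a) + Hv n)) *
              (∏ b ∈ univ.filter (fun b : Fin n => idx a < b), (Zv (σ b) - Zv (w a)))))
            (mem_univ x.1)
          rw [nmA]
          simp only [if_true]
          exact h3
        · refine Dvd.dvd.mul_left ?_ _
          have hcx : σ.symm (w x.1) < x.2 := by
            rcases lt_or_eq_of_le (le_trans (hc x.1) (not_lt.mp hbx)) with h | h
            · exact h
            · exact absurd h.symm hx.2.1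
          have h1 : (Zv (σ x.2) - Zv (σ (σ.symm (w x.1))) + Hv n)
              ∣ ∏ b ∈ univ.filter (fun b : Fin n => σ.symm (w x.1) < b),
                  (Zv (σ b) - Zv (σ (σ.symm (w x.1))) + Hv n) :=
            Finset.dvd_prod_of_mem _ (by simp only [mem_filter, mem_univ, true_and]; exact hcx)
          have h2 := dvd_trans h1 (Finset.dvd_prod_of_mem
            (fun a => ∏ b ∈ univ.filter (fun b : Fin n => a < b),
              (Zv (σ b) - Zv (σ a) + Hv n)) (mem_univ (σ.symm (w x.1))))
          rwa [Equiv.apply_symm_apply] at h2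

end Bdvd

-- ### the pairing argument: pairs of terms have no pole along `z_q = z_p`
section PairOl
variable {n k : ℕ}

lemma rename_Zv_eq (p q u : Fin n) :
    rename (rho p q) (Zv u) = Zv (if u = q then p else u) := by
  rw [Zv, rename_X]
  congr 1
  simp [rho, apply_ite Sum.inl]

lemma rename_Hv_eq (p q : Fin n) : rename (rho p q) (Hv n) = Hv n := by
  rw [Hv, rename_X]
  simp [rho]

lemma rename_fac_ne (p q u v : Fin n) :
    rename (rho p q) (Zv u - Zv v + Hv n) ≠ 0 := by
  rw [map_add, map_sub, rename_Zv_eq, rename_Zv_eq, rename_Hv_eq]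
  exact fac_ne_zero _ _

lemma rename_pairHk_ne (p q : Fin n) (w : Fin k → Fin n) :
    rename (rho p q) (pairHk w) ≠ 0 := by
  rw [pairHk, map_prod, Finset.prod_ne_zero_iff]
  intro a _
  rw [map_prod, Finset.prod_ne_zero_iff]
  intro b _
  exact rename_fac_ne _ _ _ _

lemma rename_exDk_ne (p q : Fin n) (w : Fin k → Fin n) (s : Fin n → Fin n) :
    rename (rho p q) (exDk w s) ≠ 0 := by
  rw [exDk, map_prod, Finset.prod_ne_zero_iff]
  intro a _
  rw [map_prod, Finset.prod_ne_zero_iff]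
  intro b _
  exact rename_fac_ne _ _ _ _

lemma rename_Bden_ne (r : Bool × Bool) (p q : Fin n) (w : Fin k → Fin n)
    (s : Fin n → Fin n) : rename (rho p q) (Bden r w s) ≠ 0 := by
  rw [Bden, map_mul]
  refine mul_ne_zero ?_ ?_ <;> split_ifs
  · exact rename_pairHk_ne p q w
  · simp
  · exact rename_exDk_ne p q w s
  · simp

lemma rename_numP_congr (r : Bool × Bool) (idx : Fin k → Fin n) (s : Fin n → Fin n)
    (p q : Fin n) (w w' : Fin k → Fin n)
    (hwx : ∀ x, rename (rho p q) (Zv (w' x)) = rename (rho p q) (Zv (w x))) :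
    rename (rho p q) (numP r idx w' s) = rename (rho p q) (numP r idx w s) := by
  simp only [numP, nmA, pairHk, exNn, map_prod, map_mul, map_sub, map_add,
    map_pow, map_one, apply_ite (⇑(rename (rho p q))), hwx]

lemma rename_Bden_congr (r : Bool × Bool) (s : Fin n → Fin n)
    (p q : Fin n) (w w' : Fin k → Fin n)
    (hwx : ∀ x, rename (rho p q) (Zv (w' x)) = rename (rho p q) (Zv (w x))) :
    rename (rho p q) (Bden r w' s) = rename (rho p q) (Bden r w s) := by
  simp only [Bden, pairHk, exDk, map_prod, map_mul, map_sub, map_add,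
    map_one, apply_ite (⇑(rename (rho p q))), hwx]

def Epoly (AB : Fin k × Fin k) (v : Fin k → Fin n) : Rp n :=
  ∏ x ∈ (PP k).erase AB, (Zv (v x.2) - Zv (v x.1))

def Fpoly (AB : Fin k × Fin k) (v : Fin k → Fin n) : Rp n := Zv (v AB.2) - Zv (v AB.1)

def Dpoly (r : Bool × Bool) (AB : Fin k × Fin k) (v : Fin k → Fin n)
    (s : Fin n → Fin n) : Rp n := Epoly AB v * Bden r v s

lemma Vdk_split (AB : Fin k × Fin k) (hmem : AB ∈ PP k) (v : Fin k → Fin n) :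
    Vdk v = Fpoly AB v * Epoly AB v := by
  rw [Vdk, prod_pairs, ← Finset.mul_prod_erase _ _ hmem, Epoly, Fpoly]

lemma denP_split (r : Bool × Bool) (AB : Fin k × Fin k) (hmem : AB ∈ PP k)
    (idx v : Fin k → Fin n) (s : Fin n → Fin n) :
    denP r idx v s = Fpoly AB v * Dpoly r AB v s := by
  rw [denP_eq, Vdk_split AB hmem, Dpoly, mul_assoc]

/-- abstract field computation for combining a pair of terms -/
lemma div_add_div_eq_div {K : Type*} [Field K] {a b c d e f : K}
    (hb : b ≠ 0) (hd : d ≠ 0) (hf : f ≠ 0)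
    (h : (a * d + c * b) * f = e * (b * d)) : a / b + c / d = e / f := by
  rw [div_add_div _ _ hb hd, div_eq_div_iff (mul_ne_zero hb hd) hf]
  linear_combination h

lemma pair_Ol (r : Bool × Bool) (idx : Fin k → Fin n) (en : Fin k → Fin n)
    (σ : Equiv.Perm (Fin n)) (hen : Function.Injective en)
    {a b : Fin k} (hab : a < b) (τ : Equiv.Perm (Fin k)) :
    (algebraMap (Rp n) (FractionRing (Rp n)) (numP r idx (en ∘ ⇑τ) ⇑σ)
        / algebraMap (Rp n) (FractionRing (Rp n)) (denP r idx (en ∘ ⇑τ) ⇑σ)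
      + algebraMap (Rp n) (FractionRing (Rp n)) (numP r idx (en ∘ ⇑(Equiv.swap a b * τ)) ⇑σ)
        / algebraMap (Rp n) (FractionRing (Rp n)) (denP r idx (en ∘ ⇑(Equiv.swap a b * τ)) ⇑σ))
      ∈ Ol (en a) (en b) := by
  classical
  set φK := algebraMap (Rp n) (FractionRing (Rp n))
  set p := en a with hp
  set q := en b with hq
  have hpq : p ≠ q := fun h => hab.ne (hen h)
  set w : Fin k → Fin n := en ∘ ⇑τ with hwdef
  set w' : Fin k → Fin n := en ∘ ⇑(Equiv.swap a b * τ) with hw'def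
  have hwinj : Function.Injective w := hen.comp τ.injective
  have hw'inj : Function.Injective w' := hen.comp (Equiv.swap a b * τ).injective
  -- the swapped vector is the value-swap of the original
  have hwx : ∀ x, w' x = Equiv.swap p q (w x) := by
    intro x
    show en (Equiv.swap a b (τ x)) = Equiv.swap p q (en (τ x))
    rcases eq_or_ne (τ x) a with h | ha'
    · rw [h, Equiv.swap_apply_left, hp, hq, Equiv.swap_apply_left]
    rcases eq_or_ne (τ x) b with h | hb'
    · rw [h, Equiv.swap_apply_right, hp, hq, Equiv.swap_apply_right]
    · rw [Equiv.swap_apply_of_ne_of_ne ha' hb',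
        Equiv.swap_apply_of_ne_of_ne (fun h => ha' (hen h)) (fun h => hb' (hen h))]
  -- ψ-invariance of the swapped variables
  have hψZ : ∀ x, rename (rho p q) (Zv (w' x)) = rename (rho p q) (Zv (w x)) := by
    intro x
    rw [hwx x, rename_Zv_eq, rename_Zv_eq]
    rcases eq_or_ne (w x) p with h | hne1
    · rw [h, Equiv.swap_apply_left, if_pos rfl, if_neg hpq]
    rcases eq_or_ne (w x) q with h | hne2
    · rw [h, Equiv.swap_apply_right, if_neg hpq, if_pos rfl]
    · rw [Equiv.swap_apply_of_ne_of_ne hne1 hne2]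
  -- the distinguished slot pair
  set A : Fin k := if τ.symm a < τ.symm b then τ.symm a else τ.symm b with hA
  set B : Fin k := if τ.symm a < τ.symm b then τ.symm b else τ.symm a with hB
  have hab' : τ.symm a ≠ τ.symm b := fun h => hab.ne (τ.symm.injective h)
  have hAB : A < B := by
    rw [hA, hB]
    rcases lt_or_gt_of_ne hab' with h | h
    · rw [if_pos h, if_pos h]; exact h
    · rw [if_neg (not_lt.mpr h.le), if_neg (not_lt.mpr h.le)]; exact h
  have hABmem : (A, B) ∈ PP k := by
    simp only [PP, mem_filter, mem_product, mem_univ, true_and]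
    exact hAB
  have hwAB : (w A = p ∧ w B = q) ∨ (w A = q ∧ w B = p) := by
    rw [hA, hB]
    rcases lt_or_gt_of_ne hab' with h | h
    · left
      rw [if_pos h, if_pos h]
      constructor <;> simp [hwdef, hp, hq, Equiv.apply_symm_apply]
    · right
      rw [if_neg (not_lt.mpr h.le), if_neg (not_lt.mpr h.le)]
      constructor <;> simp [hwdef, hp, hq, Equiv.apply_symm_apply]
  -- uniqueness of the preimages of p, q under w
  have huniq_p : ∀ x, w x = p → x = τ.symm a := by
    intro x hx
    have : τ x = a := hen hx
    rw [← this, Equiv.symm_apply_apply]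
  have huniq_q : ∀ x, w x = q → x = τ.symm b := by
    intro x hx
    have : τ x = b := hen hx
    rw [← this, Equiv.symm_apply_apply]
  -- the Vandermonde split
  have hFw' : Fpoly (A, B) w' = - Fpoly (A, B) w := by
    rcases hwAB with ⟨h1, h2⟩ | ⟨h1, h2⟩ <;>
    · rw [Fpoly, Fpoly]
      rw [show (A, B).2 = B from rfl, show (A, B).1 = A from rfl,
        hwx A, hwx B, h1, h2, Equiv.swap_apply_left, Equiv.swap_apply_right]
      ring
  have hFcase : Fpoly (A, B) w = lin q p false ∨ Fpoly (A, B) w = -(lin q p false) := by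
    rw [Fpoly, lin_false_eq, show (A, B).2 = B from rfl, show (A, B).1 = A from rfl]
    rcases hwAB with ⟨h1, h2⟩ | ⟨h1, h2⟩
    · left; rw [h1, h2]
    · right; rw [h1, h2]; ring
  -- ψ-congruences
  have hnum : rename (rho p q) (numP r idx w' ⇑σ) = rename (rho p q) (numP r idx w ⇑σ) :=
    rename_numP_congr r idx ⇑σ p q w w' hψZ
  have hψE : rename (rho p q) (Epoly (A, B) w') = rename (rho p q) (Epoly (A, B) w) := by
    rw [Epoly, Epoly]
    simp only [map_prod, map_sub, hψZ]
  have hψD : rename (rho p q) (Dpoly r (A, B) w' ⇑σ)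
      = rename (rho p q) (Dpoly r (A, B) w ⇑σ) := by
    rw [Dpoly, Dpoly, map_mul, map_mul, hψE, rename_Bden_congr r ⇑σ p q w w' hψZ]
  -- nonvanishing of ψ(E w)
  have hψEne : rename (rho p q) (Epoly (A, B) w) ≠ 0 := by
    rw [Epoly, map_prod, Finset.prod_ne_zero_iff]
    intro x hx
    rw [Finset.mem_erase] at hx
    have hxPP := hx.2
    simp only [PP, mem_filter, mem_product] at hxPP
    have hx12 : x.1 < x.2 := hxPP.2
    rw [map_sub, rename_Zv_eq, rename_Zv_eq]
    apply zsub_ne_zero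
    intro hcontra
    by_cases hq2 : w x.2 = q <;> by_cases hq1 : w x.1 = q
    · exact (hx12.ne (hwinj (hq1.trans hq2.symm))).elim
    · rw [if_pos hq2, if_neg hq1] at hcontra
      have hx1p : w x.1 = p := hcontra.symm
      have e1 : x.1 = τ.symm a := huniq_p _ hx1p
      have e2 : x.2 = τ.symm b := huniq_q _ hq2
      have hlt : τ.symm a < τ.symm b := e1 ▸ e2 ▸ hx12
      apply hx.1
      have hA' : A = x.1 := by rw [hA, if_pos hlt, ← e1]
      have hB' : B = x.2 := by rw [hB, if_pos hlt, ← e2]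
      rw [hA', hB']
    · rw [if_neg hq2, if_pos hq1] at hcontra
      have hx2p : w x.2 = p := hcontra
      have e1 : x.1 = τ.symm b := huniq_q _ hq1
      have e2 : x.2 = τ.symm a := huniq_p _ hx2p
      have hlt : τ.symm b < τ.symm a := e1 ▸ e2 ▸ hx12
      apply hx.1
      have hA' : A = x.1 := by rw [hA, if_neg (not_lt.mpr hlt.le), ← e1]
      have hB' : B = x.2 := by rw [hB, if_neg (not_lt.mpr hlt.le), ← e2]
      rw [hA', hB']
    · rw [if_neg hq2, if_neg hq1] at hcontra
      exact hx12.ne' (hwinj hcontra)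
  have hψDne : rename (rho p q) (Dpoly r (A, B) w ⇑σ) ≠ 0 := by
    rw [Dpoly, map_mul]
    exact mul_ne_zero hψEne (rename_Bden_ne r p q w ⇑σ)
  have hψD'ne : rename (rho p q) (Dpoly r (A, B) w' ⇑σ) ≠ 0 := by
    rw [hψD]; exact hψDne
  have hDne : Dpoly r (A, B) w ⇑σ ≠ 0 := fun h => hψDne (by rw [h, map_zero])
  have hD'ne : Dpoly r (A, B) w' ⇑σ ≠ 0 := fun h => hψD'ne (by rw [h, map_zero])
  -- the key divisibility
  set n₁ := numP r idx w ⇑σ with hn₁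
  set n₂ := numP r idx w' ⇑σ with hn₂
  have hψM : rename (rho p q)
      (n₂ * Dpoly r (A, B) w ⇑σ - n₁ * Dpoly r (A, B) w' ⇑σ) = 0 := by
    rw [map_sub, map_mul, map_mul, hnum, hψD]; ring
  obtain ⟨M', hM'⟩ := lin_dvd_of_rename_eq_zero p q hψM
  have hMkey : n₁ * Dpoly r (A, B) w' ⇑σ - n₂ * Dpoly r (A, B) w ⇑σ
      = lin q p false * (-M') := by
    rw [mul_neg, ← hM']; ring
  have hlinne : lin q p false ≠ 0 := (prime_lin hpq.symm false).ne_zero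
  have hden1 : denP r idx w ⇑σ = Fpoly (A, B) w * Dpoly r (A, B) w ⇑σ :=
    denP_split r (A, B) hABmem idx w ⇑σ
  have hden2 : denP r idx w' ⇑σ = Fpoly (A, B) w' * Dpoly r (A, B) w' ⇑σ :=
    denP_split r (A, B) hABmem idx w' ⇑σ
  have hdnz1 : φK (denP r idx w ⇑σ) ≠ 0 := phi_ne_zero (denP_ne_zero r hwinj)
  have hdnz2 : φK (denP r idx w' ⇑σ) ≠ 0 := phi_ne_zero (denP_ne_zero r hw'inj)
  have hDDnz : φK (Dpoly r (A, B) w ⇑σ * Dpoly r (A, B) w' ⇑σ) ≠ 0 :=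
    phi_ne_zero (mul_ne_zero hDne hD'ne)
  -- assemble the membership
  rcases hFcase with hFeq | hFeq
  · refine ⟨-M', Dpoly r (A, B) w ⇑σ * Dpoly r (A, B) w' ⇑σ,
      by rw [map_mul]; exact mul_ne_zero hψDne hψD'ne, ?_⟩
    have hpoly : (n₁ * denP r idx w' ⇑σ + n₂ * denP r idx w ⇑σ)
          * (Dpoly r (A, B) w ⇑σ * Dpoly r (A, B) w' ⇑σ)
        = (-M') * (denP r idx w ⇑σ * denP r idx w' ⇑σ) := by
      rw [hden1, hden2, hFw', hFeq]
      linear_combination (-(lin q p false) * Dpoly r (A, B) w ⇑σ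
        * Dpoly r (A, B) w' ⇑σ) * hMkey
    refine div_add_div_eq_div hdnz1 hdnz2 hDDnz ?_
    have hmap := congrArg φK hpoly
    simp only [map_mul, map_add] at hmap ⊢
    exact hmap
  · refine ⟨M', Dpoly r (A, B) w ⇑σ * Dpoly r (A, B) w' ⇑σ,
      by rw [map_mul]; exact mul_ne_zero hψDne hψD'ne, ?_⟩
    have hpoly : (n₁ * denP r idx w' ⇑σ + n₂ * denP r idx w ⇑σ)
          * (Dpoly r (A, B) w ⇑σ * Dpoly r (A, B) w' ⇑σ)
        = M' * (denP r idx w ⇑σ * denP r idx w' ⇑σ) := by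
      rw [hden1, hden2, hFw', hFeq]
      linear_combination (lin q p false * Dpoly r (A, B) w ⇑σ
        * Dpoly r (A, B) w' ⇑σ) * hMkey
    refine div_add_div_eq_div hdnz1 hdnz2 hDDnz ?_
    have hmap := congrArg φK hpoly
    simp only [map_mul, map_add] at hmap ⊢
    exact hmap

end PairOl

-- ### assembling the sign and the per-term polynomial
section Assemble
variable {n k : ℕ}

lemma aux_div {K : Type*} [Field K] {V B m ε : K}
    (hV : V ≠ 0) (hB : B ≠ 0) (hε : ε * ε = 1) :
    V * ((B * m) / (ε * V * B)) = ε * m := by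
  have hε0 : ε ≠ 0 := by
    intro h
    rw [h, zero_mul] at hε
    exact zero_ne_one hε
  rw [mul_div_assoc', div_eq_iff (mul_ne_zero (mul_ne_zero hε0 hV) hB)]
  linear_combination (-(V * B * m)) * hε

lemma term_clears_V (r : Bool × Bool) (idx en : Fin k → Fin n) (σ : Equiv.Perm (Fin n))
    (hen : Function.Injective en) (hidx : StrictMono idx) (τ : Equiv.Perm (Fin k)) :
    ∃ c : Rp n,
      algebraMap (Rp n) (FractionRing (Rp n)) (Vdk en) *
        (algebraMap (Rp n) (FractionRing (Rp n)) (numP r idx (en ∘ ⇑τ) ⇑σ)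
          / algebraMap (Rp n) (FractionRing (Rp n)) (denP r idx (en ∘ ⇑τ) ⇑σ)) =
      algebraMap (Rp n) (FractionRing (Rp n)) c := by
  classical
  set φK := algebraMap (Rp n) (FractionRing (Rp n))
  have hwinj : Function.Injective (en ∘ ⇑τ) := hen.comp τ.injective
  obtain ⟨m, hm⟩ := B_dvd r idx (en ∘ ⇑τ) σ hwinj hidx
  set εR : Rp n := ((Equiv.Perm.sign τ : ℤ) : Rp n) with hεR
  have hsign : Vdk (en ∘ ⇑τ) = εR * Vdk en := by
    rw [Vdk, Vdk, hεR]
    exact vandermonde_perm_sign τ (fun a => Zv (en a))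
  have hee : εR * εR = 1 := by
    rw [hεR]
    rcases Int.units_eq_one_or (Equiv.Perm.sign τ) with hs | hs <;> rw [hs] <;> norm_num
  refine ⟨εR * m, ?_⟩
  rw [hm, denP_eq, hsign]
  simp only [map_mul]
  exact aux_div (phi_ne_zero (Vdk_ne_zero hen)) (phi_ne_zero (Bden_ne_zero r))
    (by rw [← map_mul, hee, map_one])

end Assemble

end WWaux

/-- Proposition `prop:poly`: for every `r ∈ {00,10,01,11}`, `σ ∈ S_n`
and `I, J ∈ I_k`, the substituted super weight function `W^{(r)}_{σ,I}(z_J,z,ℏ)` lies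
in the polynomial subring `ℂ[z₁,…,z_n,ℏ]` of `ℂ(z₁,…,z_n,ℏ)`. -/
theorem weightWSub_isPolynomial {n k : ℕ} (hkn : k ≤ n) (r : Bool × Bool)
    (σ : Equiv.Perm (Fin n)) (I : Finset (Fin n)) (hI : I.card = k)
    (J : Finset (Fin n)) (hJ : J.card = k) :
    weightWSub r σ I hI J hJ ∈
      Set.range (algebraMap (MvPolynomial (ZVar n) ℂ) (ZField n)) := by
  classical
  rw [weightWSub]
  set φK := algebraMap (MvPolynomial (ZVar n) ℂ) (ZField n) with hφK
  set en : Fin k → Fin n := setIdx J hJ with hen_def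
  set idx : Fin k → Fin n :=
    setIdx (I.map σ.symm.toEmbedding) (by rw [Finset.card_map]; exact hI) with hidx_def
  have hen_sm : StrictMono en := by
    intro a b hab
    exact (J.orderIsoOfFin hJ).strictMono hab
  have hidx_sm : StrictMono idx := by
    intro a b hab
    exact ((I.map σ.symm.toEmbedding).orderIsoOfFin
      (by rw [Finset.card_map]; exact hI)).strictMono hab
  have hen_inj : Function.Injective en := hen_sm.injective
  -- normal form of each term
  have hterm : ∀ τ : Equiv.Perm (Fin k),
      superU r idx (fun a => zval n (setIdx J hJ (τ a))) (fun b => zval n (σ b)) (hval n)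
        = φK (WWaux.numP r idx (en ∘ ⇑τ) ⇑σ) / φK (WWaux.denP r idx (en ∘ ⇑τ) ⇑σ) :=
    fun τ => WWaux.superU_eq r idx (en ∘ ⇑τ) ⇑σ
  simp only [← hen_def] at hterm
  simp only [hterm]
  set S : ZField n := ∑ τ : Equiv.Perm (Fin k),
    φK (WWaux.numP r idx (en ∘ ⇑τ) ⇑σ) / φK (WWaux.denP r idx (en ∘ ⇑τ) ⇑σ) with hSdef
  -- clear the Vandermonde
  have hstep := fun τ : Equiv.Perm (Fin k) =>
    WWaux.term_clears_V r idx en σ hen_inj hidx_sm τ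
  choose c hc using hstep
  have hsum : φK (WWaux.Vdk en) * S = φK (∑ τ : Equiv.Perm (Fin k), c τ) := by
    rw [hSdef, Finset.mul_sum, map_sum]
    exact Finset.sum_congr rfl (fun τ _ => hc τ)
  -- each Vandermonde prime divides the numerator sum
  have hdvd : ∀ x ∈ WWaux.PP k,
      (WWaux.Zv (en x.2) - WWaux.Zv (en x.1)) ∣ ∑ τ : Equiv.Perm (Fin k), c τ := by
    intro x hx
    have hx12 : x.1 < x.2 := by
      simpa [WWaux.PP] using hx
    have hpq : en x.1 ≠ en x.2 := fun h => hx12.ne (hen_inj h)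
    -- no pole along z_q = z_p for the sum, by pairing
    have hOl : S ∈ WWaux.Ol (en x.1) (en x.2) := by
      have hre : S = (∑ τ : Equiv.Perm (Fin k),
          (φK (WWaux.numP r idx (en ∘ ⇑τ) ⇑σ) / φK (WWaux.denP r idx (en ∘ ⇑τ) ⇑σ)
            + φK (WWaux.numP r idx (en ∘ ⇑(Equiv.swap x.1 x.2 * τ)) ⇑σ)
              / φK (WWaux.denP r idx (en ∘ ⇑(Equiv.swap x.1 x.2 * τ)) ⇑σ))) / 2 := by
        rw [Finset.sum_add_distrib]
        have hcomp : (∑ τ : Equiv.Perm (Fin k),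
            φK (WWaux.numP r idx (en ∘ ⇑(Equiv.swap x.1 x.2 * τ)) ⇑σ)
              / φK (WWaux.denP r idx (en ∘ ⇑(Equiv.swap x.1 x.2 * τ)) ⇑σ)) = S := by
          rw [hSdef]
          exact Equiv.sum_comp (Equiv.mulLeft (Equiv.swap x.1 x.2))
            (fun τ => φK (WWaux.numP r idx (en ∘ ⇑τ) ⇑σ)
              / φK (WWaux.denP r idx (en ∘ ⇑τ) ⇑σ))
        rw [hcomp, ← hSdef, add_self_div_two]
      rw [hre]
      apply WWaux.Ol_half
      apply WWaux.Ol_sum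
      intro τ _
      exact WWaux.pair_Ol r idx en σ hen_inj hx12 τ
    have hl : WWaux.lin (en x.2) (en x.1) false ∣ WWaux.Vdk en := by
      rw [WWaux.lin_false_eq, WWaux.Vdk, WWaux.prod_pairs]
      exact Finset.dvd_prod_of_mem
        (fun y : Fin k × Fin k => WWaux.Zv (en y.2) - WWaux.Zv (en y.1)) hx
    have := WWaux.lin_dvd_of_Ol (en x.1) (en x.2) hpq hOl hsum hl
    rwa [WWaux.lin_false_eq] at this
  -- the full Vandermonde divides
  have hVdvd : WWaux.Vdk en ∣ ∑ τ : Equiv.Perm (Fin k), c τ := by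
    rw [WWaux.Vdk, WWaux.prod_pairs]
    apply WWaux.prod_primes_dvd
    · intro x hx
      have hx12 : x.1 < x.2 := by simpa [WWaux.PP] using hx
      exact WWaux.prime_zsub (fun h => hx12.ne' (hen_inj h))
    · intro x hx y hy hxy
      have hx12 : x.1 < x.2 := by simpa [WWaux.PP] using hx
      have hy12 : y.1 < y.2 := by simpa [WWaux.PP] using hy
      rw [← WWaux.lin_false_eq, ← WWaux.lin_false_eq]
      have hyne : en y.2 ≠ en y.1 := fun h => hy12.ne' (hen_inj h)
      by_cases h2 : en y.2 = en x.2 ∨ en y.2 = en x.1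
      · refine WWaux.lin0_not_dvd hyne (Or.inr rfl) ?_ ?_
        · intro h
          have e1 : y.1 = x.2 := hen_inj h
          rcases h2 with h | h
          · have e2 : y.2 = x.2 := hen_inj h
            exact hy12.ne' (e2.trans e1.symm)
          · have e2 : y.2 = x.1 := hen_inj h
            have hcon : y.2 < y.1 := by rw [e1, e2]; exact hx12
            exact absurd hy12 (not_lt.mpr hcon.le)
        · intro h
          have e1 : y.1 = x.1 := hen_inj h
          rcases h2 with h | h
          · have e2 : y.2 = x.2 := hen_inj h
            exact hxy (Prod.ext e1.symm e2.symm)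
          · have e2 : y.2 = x.1 := hen_inj h
            exact hy12.ne' (e2.trans e1.symm)
      · push_neg at h2
        exact WWaux.lin0_not_dvd hyne (Or.inl rfl) h2.1 h2.2
    · exact hdvd
  obtain ⟨e, he⟩ := hVdvd
  refine ⟨e, ?_⟩
  have hVne : φK (WWaux.Vdk en) ≠ 0 := WWaux.phi_ne_zero (WWaux.Vdk_ne_zero hen_inj)
  have : φK (WWaux.Vdk en) * S = φK (WWaux.Vdk en) * φK e := by
    rw [hsum, he, map_mul]
  exact (mul_left_cancel₀ hVne this).symm
end
end

section
/- For every r ∈ {00,10,01,11}, every σ ∈ S_n and every I ∈ I_k, the self-substitution of the super weight function factors as W^{(r)}_{σ,I}(z_I,z,ℏ) = ∏_{1≤a<b≤n, σ(a)∈I, σ(b)∉I} (z_{σ(b)} − z_{σ(a)}) · ∏_{1≤b<a≤n, (a,b) is ♠(r,σ,I)} (z_{σ(a)} − z_{σ(b)} + ℏ), as elements of ℂ[z_1,…,z_n,ℏ]. -/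
open Finset

noncomputable section

open scoped Classical

/-- The ♠ condition on a pair `b < a`:  for `r=00`: `σ(a) ∈ I` and `σ(b) ∉ I`;
for `r=10`: `σ(a) ∈ I`; for `r=01`: `σ(b) ∉ I`; for `r=11`: `σ(a) ∈ I`, or both
`σ(a) ∉ I` and `σ(b) ∉ I`. -/
def spadePair (r : Bool × Bool) {n : ℕ} (σ : Equiv.Perm (Fin n)) (I : Finset (Fin n))
    (a b : Fin n) : Prop :=
  match r with
  | (false, false) => σ a ∈ I ∧ σ b ∉ I
  | (true, false) => σ a ∈ I
  | (false, true) => σ b ∉ I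
  | (true, true) => σ a ∈ I ∨ (σ a ∉ I ∧ σ b ∉ I)

/-- The polynomial `∏_{1 ≤ b < a ≤ n, (a,b) is ♠(r,σ,I)} (z_{σ(a)} - z_{σ(b)} + ℏ)`. -/
def spadeProd (r : Bool × Bool) {n : ℕ} (σ : Equiv.Perm (Fin n)) (I : Finset (Fin n)) :
    MvPolynomial (ZVar n) ℂ :=
  ∏ a : Fin n, ∏ b ∈ univ.filter (fun b : Fin n => b < a ∧ spadePair r σ I a b),
    (MvPolynomial.X (Sum.inl (σ a)) - MvPolynomial.X (Sum.inl (σ b)) +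
      MvPolynomial.X (Sum.inr ()))

/-- The polynomial `∏_{1 ≤ a < b ≤ n, σ(a) ∈ I, σ(b) ∉ I} (z_{σ(b)} - z_{σ(a)})`. -/
def clubProd {n : ℕ} (σ : Equiv.Perm (Fin n)) (I : Finset (Fin n)) :
    MvPolynomial (ZVar n) ℂ :=
  ∏ a : Fin n, ∏ b ∈ univ.filter (fun b : Fin n => a < b ∧ σ a ∈ I ∧ σ b ∉ I),
    (MvPolynomial.X (Sum.inl (σ b)) - MvPolynomial.X (Sum.inl (σ a)))


/-! ### Auxiliary infrastructure -/

section PairProd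

variable {M : Type*} [CommMonoid M] {n : ℕ}

/-- Product over pairs `c < d` in `Fin n`. -/
def pairProd (Φ : Fin n → Fin n → M) : M :=
  ∏ d : Fin n, ∏ c ∈ univ.filter (fun c => c < d), Φ c d

lemma pairProd_mul (Φ Ψ : Fin n → Fin n → M) :
    pairProd Φ * pairProd Ψ = pairProd (fun c d => Φ c d * Ψ c d) := by
  simp [pairProd, ← Finset.prod_mul_distrib]

lemma pairProd_congr {Φ Ψ : Fin n → Fin n → M} (h : ∀ c d, c < d → Φ c d = Ψ c d) :
    pairProd Φ = pairProd Ψ :=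
  Finset.prod_congr rfl fun d _ => Finset.prod_congr rfl fun c hc =>
    h c d (by simpa using hc)

lemma prod_swap_pairs (Φ : Fin n → Fin n → M) :
    (∏ c : Fin n, ∏ d ∈ univ.filter (fun d => c < d), Φ c d) = pairProd Φ :=
  Finset.prod_comm' (by intro x y; simp)

lemma prod_mem_extend (S : Finset (Fin n)) (f : Fin n → M) :
    ∏ d ∈ S, f d = ∏ d : Fin n, if d ∈ S then f d else 1 := by
  rw [Finset.prod_ite_mem, univ_inter]

lemma prod_prod_extend (S : Finset (Fin n)) (P : Fin n → Finset (Fin n))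
    (f : Fin n → Fin n → M) :
    (∏ a ∈ S, ∏ b ∈ P a, f a b) = ∏ a : Fin n, ∏ b ∈ P a, if a ∈ S then f a b else 1 := by
  rw [prod_mem_extend]
  refine Finset.prod_congr rfl fun a _ => ?_
  split_ifs with ha
  · rfl
  · exact Finset.prod_const_one.symm

lemma prod_split_tri (c : Fin n) (f : Fin n → M) :
    (∏ b : Fin n, f b) =
      f c * ((∏ b ∈ univ.filter (fun b => b < c), f b) *
        (∏ b ∈ univ.filter (fun b => c < b), f b)) := by
  have hu : (univ.erase c) = univ.filter (fun b => b < c) ∪ univ.filter (fun b => c < b) := by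
    ext b
    simp [lt_or_lt_iff_ne, eq_comm, ne_comm]
  have hd : Disjoint (univ.filter (fun b : Fin n => b < c)) (univ.filter (fun b => c < b)) := by
    rw [Finset.disjoint_left]
    intro b hb hb'
    simp only [mem_filter] at hb hb'
    exact absurd hb'.2 (not_lt_of_gt hb.2)
  rw [← Finset.mul_prod_erase univ f (mem_univ c), hu, Finset.prod_union hd]

end PairProd

section SetIdx

variable {n k : ℕ} {S : Finset (Fin n)} {hS : S.card = k}

lemma setIdx_mem_s8 (a : Fin k) : setIdx S hS a ∈ S := (S.orderIsoOfFin hS a).2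

lemma setIdx_lt_iff {a b : Fin k} : setIdx S hS a < setIdx S hS b ↔ a < b := by
  rw [setIdx, setIdx, Subtype.coe_lt_coe, OrderIso.lt_iff_lt]

lemma setIdx_strictMono_s8 : StrictMono (setIdx S hS) := fun _ _ h => setIdx_lt_iff.2 h

lemma setIdx_injective : Function.Injective (setIdx S hS) :=
  setIdx_strictMono_s8.injective

lemma setIdx_surj {d : Fin n} (hd : d ∈ S) : ∃ a : Fin k, setIdx S hS a = d :=
  ⟨(S.orderIsoOfFin hS).symm ⟨d, hd⟩, by simp [setIdx]⟩

lemma prod_setIdx {M : Type*} [CommMonoid M] (f : Fin n → M) :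
    (∏ a : Fin k, f (setIdx S hS a)) = ∏ d ∈ S, f d := by
  rw [← Finset.prod_coe_sort S f]
  exact Fintype.prod_equiv (S.orderIsoOfFin hS).toEquiv _ _ (fun a => rfl)

end SetIdx

lemma perm_le_eq_id {k : ℕ} (f : Equiv.Perm (Fin k)) (h : ∀ a, f a ≤ a) (a : Fin k) :
    f a = a := by
  have key : ∀ m : ℕ, ∀ a : Fin k, a.val ≤ m → f a = a := by
    intro m
    induction m with
    | zero =>
      intro a ha
      have h1 : (f a).val ≤ a.val := h a
      exact Fin.ext (by omega)
    | succ m ih =>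
      intro a ha
      rcases lt_or_eq_of_le (h a) with hlt | heq
      · have hfa : (f a).val ≤ m := by
          have := hlt
          have : (f a).val < a.val := hlt
          omega
        have h2 : f (f a) = f a := ih (f a) hfa
        exact absurd (f.injective h2) (ne_of_lt hlt)
      · exact heq
  exact key a.val a le_rfl

/-! ### Nonvanishing facts in `ZField n` -/

set_option maxHeartbeats 1000000
set_option synthInstance.maxHeartbeats 200000

lemma mvpoly_ne_zero_of_eval {σ : Type*} (p : MvPolynomial σ ℂ) (v : σ → ℂ)
    (h : MvPolynomial.eval v p ≠ 0) : p ≠ 0 := fun hp => h (by rw [hp]; simp)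

lemma algebraMap_ZField_ne_zero {n : ℕ} {p : MvPolynomial (ZVar n) ℂ} (hp : p ≠ 0) :
    algebraMap (MvPolynomial (ZVar n) ℂ) (ZField n) p ≠ 0 := by
  intro h0
  exact hp (IsFractionRing.injective (MvPolynomial (ZVar n) ℂ) (ZField n)
    (by rw [h0, (algebraMap (MvPolynomial (ZVar n) ℂ) (ZField n)).map_zero]))

lemma zval_sub_ne_zero {n : ℕ} {b c : Fin n} (h : b ≠ c) : zval n b - zval n c ≠ 0 := by
  rw [zval, zval, ← (algebraMap (MvPolynomial (ZVar n) ℂ) (ZField n)).map_sub]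
  refine algebraMap_ZField_ne_zero (mvpoly_ne_zero_of_eval _
    (fun x => if x = Sum.inl b then 1 else 0) ?_)
  have hthis : (Sum.inl c : ZVar n) ≠ Sum.inl b := by
    intro hc
    exact h (Sum.inl.inj hc).symm
  simp [hthis]

lemma zval_sub_add_hval_ne_zero {n : ℕ} (b c : Fin n) :
    zval n b - zval n c + hval n ≠ 0 := by
  rw [zval, zval, hval, ← (algebraMap (MvPolynomial (ZVar n) ℂ) (ZField n)).map_sub,
    ← (algebraMap (MvPolynomial (ZVar n) ℂ) (ZField n)).map_add]
  refine algebraMap_ZField_ne_zero (mvpoly_ne_zero_of_eval _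
    (Sum.elim (fun _ => 0) (fun _ => 1)) ?_)
  simp

lemma hval_ne_zero (n : ℕ) : hval n ≠ 0 := by
  rw [hval]
  refine algebraMap_ZField_ne_zero (mvpoly_ne_zero_of_eval _
    (Sum.elim (fun _ => 0) (fun _ => 1)) ?_)
  simp

/-! ### The core diagonal substitution computation -/

/-- The ♠ condition expressed via membership in a set `S` (σ absorbed). -/
def spadeSet (r : Bool × Bool) {n : ℕ} (S : Finset (Fin n)) (a b : Fin n) : Prop :=
  match r with
  | (false, false) => a ∈ S ∧ b ∉ S
  | (true, false) => a ∈ S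
  | (false, true) => b ∉ S
  | (true, true) => a ∈ S ∨ (a ∉ S ∧ b ∉ S)

section Core

variable {F : Type*} [Field F] {n k : ℕ}

lemma blockA (S : Finset (Fin n)) (hS : S.card = k) (w : Fin n → Fin n → F) (z : Fin n → F) :
    (∏ a : Fin k,
      ((∏ b ∈ univ.filter (fun b : Fin n => b < setIdx S hS a), w b (setIdx S hS a)) *
       (∏ b ∈ univ.filter (fun b : Fin n => setIdx S hS a < b), (z b - z (setIdx S hS a))))) =
    pairProd (fun c d => if d ∈ S then w c d else 1) *
    pairProd (fun c d => if c ∈ S then z d - z c else 1) := by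
  have e1 : (∏ a : Fin k,
      ((∏ b ∈ univ.filter (fun b : Fin n => b < setIdx S hS a), w b (setIdx S hS a)) *
       (∏ b ∈ univ.filter (fun b : Fin n => setIdx S hS a < b), (z b - z (setIdx S hS a))))) =
      ∏ d ∈ S, ((∏ b ∈ univ.filter (fun b : Fin n => b < d), w b d) *
       (∏ b ∈ univ.filter (fun b : Fin n => d < b), (z b - z d))) :=
    prod_setIdx (fun d => (∏ b ∈ univ.filter (fun b : Fin n => b < d), w b d) *
       (∏ b ∈ univ.filter (fun b : Fin n => d < b), (z b - z d)))
  rw [e1, Finset.prod_mul_distrib]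
  congr 1
  · rw [prod_prod_extend S (fun d => univ.filter (fun b => b < d)) (fun d b => w b d)]
    rfl
  · rw [prod_prod_extend S (fun c => univ.filter (fun b => c < b)) (fun c b => z b - z c)]
    exact prod_swap_pairs (fun c d => if c ∈ S then z d - z c else 1)

lemma blockB (r : Bool × Bool) (S : Finset (Fin n)) (hS : S.card = k) (z : Fin n → F) (h : F) :
    (∏ a : Fin k, ∏ b ∈ univ.filter (fun b : Fin k => a < b),
        tPairFactor r (z (setIdx S hS b) - z (setIdx S hS a)) h) =
      pairProd (fun c d => if c ∈ S ∧ d ∈ S then tPairFactor r (z d - z c) h else 1) := by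
  have step1 : ∀ a : Fin k, (∏ b ∈ univ.filter (fun b : Fin k => a < b),
      tPairFactor r (z (setIdx S hS b) - z (setIdx S hS a)) h) =
      ∏ d ∈ S.filter (fun d => setIdx S hS a < d),
        tPairFactor r (z d - z (setIdx S hS a)) h := by
    intro a
    refine Finset.prod_bij (fun b _ => setIdx S hS b) ?_ ?_ ?_ ?_
    · intro b hb
      simp only [mem_filter, mem_univ, true_and] at hb ⊢
      exact ⟨setIdx_mem_s8 b, setIdx_lt_iff.2 hb⟩
    · intro b1 _ b2 _ he
      exact setIdx_injective he
    · intro d hd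
      simp only [mem_filter, mem_univ, true_and] at hd
      obtain ⟨b, hb⟩ := setIdx_surj (hS := hS) hd.1
      refine ⟨b, by simp [← hb, setIdx_lt_iff] at hd ⊢; exact hd.2, hb⟩
    · intro b _; rfl
  rw [Finset.prod_congr rfl (fun a _ => step1 a)]
  have e2 : (∏ a : Fin k, ∏ d ∈ S.filter (fun d => setIdx S hS a < d),
        tPairFactor r (z d - z (setIdx S hS a)) h)
      = ∏ c ∈ S, ∏ d ∈ S.filter (fun d => c < d), tPairFactor r (z d - z c) h :=
    prod_setIdx (fun c => ∏ d ∈ S.filter (fun d => c < d), tPairFactor r (z d - z c) h)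
  rw [e2, prod_prod_extend S (fun c => S.filter (fun d => c < d))
    (fun c d => tPairFactor r (z d - z c) h)]
  have e3 : ∀ c : Fin n, (∏ d ∈ S.filter (fun d => c < d),
        (if c ∈ S then tPairFactor r (z d - z c) h else 1))
      = ∏ d ∈ univ.filter (fun d => c < d),
        (if d ∈ S then (if c ∈ S then tPairFactor r (z d - z c) h else 1) else 1) := by
    intro c
    have efil : S.filter (fun d => c < d)
        = (univ.filter (fun d => c < d)).filter (fun d => d ∈ S) := by
      ext d; simp [and_comm]
    rw [efil, Finset.prod_filter]
  rw [Finset.prod_congr rfl (fun c _ => e3 c),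
    prod_swap_pairs (fun c d => if d ∈ S then (if c ∈ S then tPairFactor r (z d - z c) h else 1) else 1)]
  exact pairProd_congr (fun c d _ => by
    by_cases hc : c ∈ S <;> by_cases hd : d ∈ S <;> simp [hc, hd])

lemma blockC (S : Finset (Fin n)) (hS : S.card = k) (z : Fin n → F) (h : F) :
    (∏ a : Fin k, ∏ b : Fin n, (z b - z (setIdx S hS a) + h)⁻¹)
      = (h⁻¹) ^ k * (pairProd (fun c d => if d ∈ S then (z c - z d + h)⁻¹ else 1) *
          pairProd (fun c d => if c ∈ S then (z d - z c + h)⁻¹ else 1)) := by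
  have e1 : (∏ a : Fin k, ∏ b : Fin n, (z b - z (setIdx S hS a) + h)⁻¹)
      = ∏ c ∈ S, ∏ b : Fin n, (z b - z c + h)⁻¹ :=
    prod_setIdx (fun c => ∏ b : Fin n, (z b - z c + h)⁻¹)
  rw [e1]
  have e2 : ∀ c : Fin n, (∏ b : Fin n, (z b - z c + h)⁻¹)
      = h⁻¹ * ((∏ b ∈ univ.filter (fun b => b < c), (z b - z c + h)⁻¹) *
          (∏ b ∈ univ.filter (fun b => c < b), (z b - z c + h)⁻¹)) := by
    intro c
    have e := prod_split_tri c (fun b => (z b - z c + h)⁻¹)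
    have e' : (z c - z c + h)⁻¹ = h⁻¹ := by rw [sub_self, zero_add]
    rw [e, e']
  rw [Finset.prod_congr rfl (fun c _ => e2 c), Finset.prod_mul_distrib,
    Finset.prod_mul_distrib, Finset.prod_const, hS]
  congr 1
  congr 1
  · rw [prod_prod_extend S (fun c => univ.filter (fun b => b < c))
      (fun c b => (z b - z c + h)⁻¹)]
    rfl
  · rw [prod_prod_extend S (fun c => univ.filter (fun b => c < b))
      (fun c b => (z b - z c + h)⁻¹)]
    exact prod_swap_pairs (fun c d => if c ∈ S then (z d - z c + h)⁻¹ else 1)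

lemma superU_diag (r : Bool × Bool) (S : Finset (Fin n)) (hS : S.card = k)
    (z : Fin n → F) (h : F)
    (hz : ∀ c d : Fin n, c ≠ d → z c - z d ≠ 0)
    (hzh : ∀ c d : Fin n, z c - z d + h ≠ 0) (hh : h ≠ 0) :
    superU r (setIdx S hS) (fun a => z (setIdx S hS a)) z h =
      pairProd (fun c d =>
        (if c ∈ S ∧ d ∉ S then z d - z c else 1) *
        (if spadeSet r S d c then z d - z c + h else 1)) := by
  obtain ⟨r1, r2⟩ := r
  have hk : h ^ k * (h⁻¹) ^ k = 1 := by
    rw [← mul_pow, mul_inv_cancel₀ hh, one_pow]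
  cases r2
  · -- r2 = false
    have expand : superU (r1, false) (setIdx S hS) (fun a => z (setIdx S hS a)) z h =
        (∏ a : Fin k,
          ((∏ b ∈ univ.filter (fun b : Fin n => b < setIdx S hS a),
              (z (setIdx S hS a) - z b + h)) *
           (∏ b ∈ univ.filter (fun b : Fin n => setIdx S hS a < b), (z b - z (setIdx S hS a))))) *
        (∏ a : Fin k, ∏ b ∈ univ.filter (fun b : Fin k => a < b),
          tPairFactor (r1, false) (z (setIdx S hS b) - z (setIdx S hS a)) h) * 1 := rfl
    rw [expand, mul_one, blockA S hS (fun b d => z d - z b + h) z,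
      blockB (r1, false) S hS z h, pairProd_mul, pairProd_mul]
    refine pairProd_congr (fun c d hcd => ?_)
    have hdc : z d - z c ≠ 0 := hz d c hcd.ne'
    have h1 : z d - z c + h ≠ 0 := hzh d c
    have h2 : z c - z d + h ≠ 0 := hzh c d
    by_cases hc : c ∈ S <;> by_cases hd : d ∈ S <;> cases r1 <;>
      simp only [hc, hd, spadeSet, tPairFactor, if_true, if_false, not_true, not_false_iff,
        and_true, and_false, true_and, false_and, ite_true, ite_false] <;>
      field_simp <;> ring
  · -- r2 = true
    have expand : superU (r1, true) (setIdx S hS) (fun a => z (setIdx S hS a)) z h =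
        (∏ a : Fin k,
          ((∏ b ∈ univ.filter (fun b : Fin n => b < setIdx S hS a),
              (z b - z (setIdx S hS a) + h)) *
           (∏ b ∈ univ.filter (fun b : Fin n => setIdx S hS a < b), (z b - z (setIdx S hS a))))) *
        (∏ a : Fin k, ∏ b ∈ univ.filter (fun b : Fin k => a < b),
          tPairFactor (r1, true) (z (setIdx S hS b) - z (setIdx S hS a)) h) *
        (h ^ k * (∏ a : Fin n, ∏ b ∈ univ.filter (fun b : Fin n => a < b), (z b - z a + h)) *
          ∏ a : Fin k, ∏ b : Fin n, (z b - z (setIdx S hS a) + h)⁻¹) := rfl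
    rw [expand, blockA S hS (fun b d => z b - z d + h) z, blockB (r1, true) S hS z h,
      blockC S hS z h, prod_swap_pairs (fun c d : Fin n => z d - z c + h)]
    have rearr :
        pairProd (fun c d => if d ∈ S then z c - z d + h else 1) *
          pairProd (fun c d => if c ∈ S then z d - z c else 1) *
          pairProd (fun c d => if c ∈ S ∧ d ∈ S then tPairFactor (r1, true) (z d - z c) h else 1) *
          (h ^ k * pairProd (fun c d : Fin n => z d - z c + h) *
            ((h⁻¹) ^ k * (pairProd (fun c d => if d ∈ S then (z c - z d + h)⁻¹ else 1) *
              pairProd (fun c d => if c ∈ S then (z d - z c + h)⁻¹ else 1))))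
        = (h ^ k * (h⁻¹) ^ k) *
          (pairProd (fun c d => if d ∈ S then z c - z d + h else 1) *
          pairProd (fun c d => if c ∈ S then z d - z c else 1) *
          pairProd (fun c d => if c ∈ S ∧ d ∈ S then tPairFactor (r1, true) (z d - z c) h else 1) *
          pairProd (fun c d : Fin n => z d - z c + h) *
          pairProd (fun c d => if d ∈ S then (z c - z d + h)⁻¹ else 1) *
          pairProd (fun c d => if c ∈ S then (z d - z c + h)⁻¹ else 1)) := by ring
    rw [rearr, hk, one_mul, pairProd_mul, pairProd_mul, pairProd_mul, pairProd_mul, pairProd_mul]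
    refine pairProd_congr (fun c d hcd => ?_)
    have hdc : z d - z c ≠ 0 := hz d c hcd.ne'
    have h1 : z d - z c + h ≠ 0 := hzh d c
    have h2 : z c - z d + h ≠ 0 := hzh c d
    by_cases hc : c ∈ S <;> by_cases hd : d ∈ S <;> cases r1 <;>
      simp only [hc, hd, spadeSet, tPairFactor, if_true, if_false, not_true, not_false_iff,
        and_true, and_false, true_and, false_and, ite_true, ite_false,
        or_true, or_false, true_or, false_or] <;>
      field_simp <;> ring

end Core

/-! ### Assembly lemmas -/

lemma mem_map_symm {n : ℕ} (σ : Equiv.Perm (Fin n)) (I : Finset (Fin n)) (c : Fin n) :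
    c ∈ I.map σ.symm.toEmbedding ↔ σ c ∈ I := by
  simp only [Finset.mem_map, Equiv.coe_toEmbedding]
  constructor
  · rintro ⟨x, hx, rfl⟩
    simpa using hx
  · intro h
    exact ⟨σ c, h, σ.symm_apply_apply c⟩

lemma spadePair_iff {n : ℕ} (r : Bool × Bool) (σ : Equiv.Perm (Fin n)) (I : Finset (Fin n))
    (a b : Fin n) : spadePair r σ I a b ↔ spadeSet r (I.map σ.symm.toEmbedding) a b := by
  obtain ⟨r1, r2⟩ := r
  cases r1 <;> cases r2 <;> simp [spadePair, spadeSet, mem_map_symm]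

/-- The permutation comparing the enumeration of `I` with that of `σ⁻¹(I)`. -/
def permG {n k : ℕ} (σ : Equiv.Perm (Fin n)) (I : Finset (Fin n)) (hI : I.card = k)
    (hS' : (I.map σ.symm.toEmbedding).card = k) : Fin k → Fin k :=
  fun s => ((I.map σ.symm.toEmbedding).orderIsoOfFin hS').symm
    ⟨σ.symm (setIdx I hI s), by
      simp only [Finset.mem_map, Equiv.coe_toEmbedding]
      exact ⟨setIdx I hI s, setIdx_mem_s8 s, rfl⟩⟩

lemma permG_spec {n k : ℕ} (σ : Equiv.Perm (Fin n)) (I : Finset (Fin n)) (hI : I.card = k)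
    (hS' : (I.map σ.symm.toEmbedding).card = k) (s : Fin k) :
    setIdx (I.map σ.symm.toEmbedding) hS' (permG σ I hI hS' s) = σ.symm (setIdx I hI s) := by
  simp [permG, setIdx]

lemma permG_inj {n k : ℕ} (σ : Equiv.Perm (Fin n)) (I : Finset (Fin n)) (hI : I.card = k)
    (hS' : (I.map σ.symm.toEmbedding).card = k) :
    Function.Injective (permG σ I hI hS') := by
  intro s s' hss
  have h1 := congrArg (setIdx (I.map σ.symm.toEmbedding) hS') hss
  rw [permG_spec, permG_spec] at h1
  exact setIdx_injective (σ.symm.injective h1)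

/-- RHS of the theorem as a pair product. -/
lemma rhs_eq {n k : ℕ} (r : Bool × Bool) (σ : Equiv.Perm (Fin n)) (I : Finset (Fin n))
    (hI : I.card = k) :
    algebraMap (MvPolynomial (ZVar n) ℂ) (ZField n) (clubProd σ I * spadeProd r σ I) =
      pairProd (fun c d =>
        (if c ∈ I.map σ.symm.toEmbedding ∧ d ∉ I.map σ.symm.toEmbedding then
            zval n (σ d) - zval n (σ c) else 1) *
        (if spadeSet r (I.map σ.symm.toEmbedding) d c then
            zval n (σ d) - zval n (σ c) + hval n else 1)) := by
  have hclub : algebraMap (MvPolynomial (ZVar n) ℂ) (ZField n) (clubProd σ I) =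
      pairProd (fun c d => if σ c ∈ I ∧ σ d ∉ I then zval n (σ d) - zval n (σ c) else 1) := by
    rw [clubProd, map_prod]
    have e1 : ∀ a : Fin n,
        (algebraMap (MvPolynomial (ZVar n) ℂ) (ZField n))
          (∏ b ∈ univ.filter (fun b : Fin n => a < b ∧ σ a ∈ I ∧ σ b ∉ I),
            (MvPolynomial.X (Sum.inl (σ b)) - MvPolynomial.X (Sum.inl (σ a)) :
              MvPolynomial (ZVar n) ℂ)) =
        ∏ b ∈ univ.filter (fun b : Fin n => a < b),
          (if σ a ∈ I ∧ σ b ∉ I then zval n (σ b) - zval n (σ a) else 1) := by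
      intro a
      rw [map_prod]
      have efil : univ.filter (fun b : Fin n => a < b ∧ σ a ∈ I ∧ σ b ∉ I)
          = (univ.filter (fun b : Fin n => a < b)).filter (fun b => σ a ∈ I ∧ σ b ∉ I) := by
        rw [Finset.filter_filter]
      rw [efil, Finset.prod_filter]
      refine Finset.prod_congr rfl fun b _ => ?_
      beta_reduce
      split_ifs with hcond
      · rw [map_sub]; rfl
      · rfl
    rw [Finset.prod_congr rfl (fun a _ => e1 a)]
    exact prod_swap_pairs (fun c d => if σ c ∈ I ∧ σ d ∉ I then zval n (σ d) - zval n (σ c) else 1)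
  have hspade : algebraMap (MvPolynomial (ZVar n) ℂ) (ZField n) (spadeProd r σ I) =
      pairProd (fun c d =>
        if spadePair r σ I d c then zval n (σ d) - zval n (σ c) + hval n else 1) := by
    rw [spadeProd, map_prod]
    refine Finset.prod_congr rfl fun a _ => ?_
    rw [map_prod]
    have efil : univ.filter (fun b : Fin n => b < a ∧ spadePair r σ I a b)
        = (univ.filter (fun b : Fin n => b < a)).filter (fun b => spadePair r σ I a b) := by
      rw [Finset.filter_filter]
    rw [efil, Finset.prod_filter]
    refine Finset.prod_congr rfl fun b _ => ?_
    beta_reduce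
    split_ifs with hcond
    · rw [map_add, map_sub]; rfl
    · rfl
  rw [map_mul, hclub, hspade, pairProd_mul]
  refine pairProd_congr (fun c d _ => ?_)
  simp only [mem_map_symm, spadePair_iff]
/-- Proposition `prop:principal`: the self-substitution factors as
`W^{(r)}_{σ,I}(z_I,z,ℏ) = ∏_♣ (z_{σ(b)} - z_{σ(a)}) · ∏_♠ (z_{σ(a)} - z_{σ(b)} + ℏ)`. -/
theorem weightWSub_self {n k : ℕ} (hkn : k ≤ n) (r : Bool × Bool)
    (σ : Equiv.Perm (Fin n)) (I : Finset (Fin n)) (hI : I.card = k) :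
    weightWSub r σ I hI I hI =
      algebraMap (MvPolynomial (ZVar n) ℂ) (ZField n) (clubProd σ I * spadeProd r σ I) := by
  have hS' : (I.map σ.symm.toEmbedding).card = k := by rw [Finset.card_map]; exact hI
  set ρ : Equiv.Perm (Fin k) :=
    Equiv.ofBijective _ (Finite.injective_iff_bijective.mp (permG_inj σ I hI hS')) with hρdef
  have hρ : ∀ s, ρ s = permG σ I hI hS' s := fun s => rfl
  have expand : weightWSub r σ I hI I hI = ∑ τ : Equiv.Perm (Fin k),
      superU r (setIdx (I.map σ.symm.toEmbedding) hS')
        (fun a => zval n (setIdx I hI (τ a))) (fun b => zval n (σ b)) (hval n) := rfl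
  rw [expand]
  have vanish : ∀ τ ∈ (univ : Finset (Equiv.Perm (Fin k))), τ ≠ ρ.symm →
      superU r (setIdx (I.map σ.symm.toEmbedding) hS')
        (fun a => zval n (setIdx I hI (τ a))) (fun b => zval n (σ b)) (hval n) = 0 := by
    intro τ _ hτ
    have hex : ∃ a : Fin k, a < permG σ I hI hS' (τ a) := by
      by_contra hno
      push_neg at hno
      have hid : ∀ a, (τ.trans ρ) a = a := perm_le_eq_id (τ.trans ρ) (fun a => hno a)
      apply hτ
      ext a
      have h2 : ρ (τ a) = a := hid a
      exact congrArg Fin.val ((Equiv.eq_symm_apply ρ).mpr h2)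
    obtain ⟨a, ha⟩ := hex
    have hzero : (∏ b ∈ univ.filter
          (fun b : Fin n => setIdx (I.map σ.symm.toEmbedding) hS' a < b),
          (zval n (σ b) - zval n (setIdx I hI (τ a)))) = 0 := by
      refine Finset.prod_eq_zero
        (i := setIdx (I.map σ.symm.toEmbedding) hS' (permG σ I hI hS' (τ a))) ?_ ?_
      · simp only [mem_filter, mem_univ, true_and]
        exact setIdx_lt_iff.2 ha
      · rw [permG_spec, Equiv.apply_symm_apply, sub_self]
    have esup : superU r (setIdx (I.map σ.symm.toEmbedding) hS')
        (fun a => zval n (setIdx I hI (τ a))) (fun b => zval n (σ b)) (hval n) =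
        (∏ a' : Fin k,
          ((∏ b ∈ univ.filter
              (fun b : Fin n => b < setIdx (I.map σ.symm.toEmbedding) hS' a'),
              (if r.2 then zval n (σ b) - zval n (setIdx I hI (τ a')) + hval n
                else zval n (setIdx I hI (τ a')) - zval n (σ b) + hval n)) *
           (∏ b ∈ univ.filter
              (fun b : Fin n => setIdx (I.map σ.symm.toEmbedding) hS' a' < b),
              (zval n (σ b) - zval n (setIdx I hI (τ a')))))) *
        (∏ a' : Fin k, ∏ b ∈ univ.filter (fun b : Fin k => a' < b),
          tPairFactor r (zval n (setIdx I hI (τ b)) - zval n (setIdx I hI (τ a'))) (hval n)) *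
        (if r.2 then
          (hval n) ^ k * (∏ a' : Fin n, ∏ b ∈ univ.filter (fun b : Fin n => a' < b),
            (zval n (σ b) - zval n (σ a') + hval n)) *
            ∏ a' : Fin k, ∏ b : Fin n, (zval n (σ b) - zval n (setIdx I hI (τ a')) + hval n)⁻¹
        else 1) := rfl
    rw [esup, Finset.prod_eq_zero (mem_univ a) (by rw [hzero, mul_zero]), zero_mul, zero_mul]
  rw [Finset.sum_eq_single_of_mem ρ.symm (mem_univ _) vanish]
  have harg : (fun a => zval n (setIdx I hI (ρ.symm a))) =
      fun a => zval n (σ (setIdx (I.map σ.symm.toEmbedding) hS' a)) := by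
    funext a
    have h1 := permG_spec σ I hI hS' (ρ.symm a)
    have h2 : permG σ I hI hS' (ρ.symm a) = a := ρ.apply_symm_apply a
    rw [h2] at h1
    rw [h1, Equiv.apply_symm_apply]
  rw [harg]
  have hz : ∀ c d : Fin n, c ≠ d → zval n (σ c) - zval n (σ d) ≠ 0 :=
    fun c d hcd => zval_sub_ne_zero (σ.injective.ne hcd)
  refine (superU_diag r (I.map σ.symm.toEmbedding) hS' (fun b => zval n (σ b)) (hval n)
    hz (fun c d => zval_sub_add_hval_ne_zero _ _) (hval_ne_zero n)).trans ?_
  exact (rhs_eq r σ I hI).symm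
end
end
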